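/- arXiv:2208.04486 — 5 statements merged into one kernel-verified Lean document; each statement's English description precedes it below -/
import Mathlib

section
/- Let Δ ≥ 2 be an integer and let ε ≥ 0 be a real number with ε·H_{Δ−1} ≤ 1/10. Define g(1) = 1 and g(ℓ) = 1 + 1.3·ε·H_{ℓ−1} for 2 ≤ ℓ ≤ Δ. Then for every integer 2 ≤ t ≤ Δ, (t−1)·ε·(g(t) − g(t−1)) ≥ ε²·g(t)². -/
/-- The `n`-th harmonic number `H_n = ∑_{m=1}^n 1/m` (with `H_0 = 0`). -/
noncomputable def harm (n : ℕ) : ℝ := ∑ j ∈ Finset.Icc 1 n, (1 : ℝ) / (j : ℝ)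

/-- The tail `H_n(m) = ∑_{j=m}^n 1/j` for `1 ≤ m ≤ n`, with the convention `H_n(0) = H_n(1)`. -/
noncomputable def harmFrom (n m : ℕ) : ℝ := ∑ j ∈ Finset.Icc (max m 1) n, (1 : ℝ) / (j : ℝ)

lemma harm_nonneg (n : ℕ) : 0 ≤ harm n := by
  apply Finset.sum_nonneg
  intro j hj
  positivity

lemma harm_mono {m n : ℕ} (h : m ≤ n) : harm m ≤ harm n := by
  apply Finset.sum_le_sum_of_subset_of_nonneg
  · exact Finset.Icc_subset_Icc_right h
  · intro j _ _; positivity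

lemma harm_succ (n : ℕ) : harm (n + 1) = harm n + 1 / (n + 1 : ℝ) := by
  unfold harm
  rw [Finset.sum_Icc_succ_top (by omega : 1 ≤ n + 1)]
  push_cast
  ring

/-- Case 1 of the recursive step in the proof of the main theorem: with
`g(1) = 1` and `g(ℓ) = 1 + 1.3·ε·H_{ℓ-1}` for `2 ≤ ℓ ≤ Δ`, if `ε·H_{Δ-1} ≤ 1/10` then
`(t-1)·ε·(g(t) - g(t-1)) ≥ ε²·g(t)²` for all `2 ≤ t ≤ Δ`. -/
theorem case1_recursion (Δ : ℕ) (hΔ : 2 ≤ Δ) (ε : ℝ) (hε : 0 ≤ ε)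
    (hsmall : ε * harm (Δ - 1) ≤ 1 / 10)
    (g : ℕ → ℝ) (hg1 : g 1 = 1)
    (hg : ∀ ℓ : ℕ, 2 ≤ ℓ → ℓ ≤ Δ → g ℓ = 1 + 1.3 * ε * harm (ℓ - 1)) :
    ∀ t : ℕ, 2 ≤ t → t ≤ Δ →
      ((t : ℝ) - 1) * ε * (g t - g (t - 1)) ≥ ε ^ 2 * g t ^ 2 := by
  intro t ht2 htΔ
  -- g (t-1) = 1 + 1.3 ε harm (t-2)
  have hgt : g t = 1 + 1.3 * ε * harm (t - 1) := hg t ht2 htΔ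
  have hgtm : g (t - 1) = 1 + 1.3 * ε * harm (t - 2) := by
    rcases Nat.lt_or_ge t 3 with h3 | h3
    · have : t = 2 := by omega
      subst this
      simp [hg1, harm]
    · have h2 : 2 ≤ t - 1 := by omega
      have := hg (t - 1) h2 (by omega)
      rw [this]
      norm_num [show t - 1 - 1 = t - 2 by omega]
  -- harm (t-1) = harm (t-2) + 1/(t-1)
  have hstep : harm (t - 1) = harm (t - 2) + 1 / ((t : ℝ) - 1) := by
    have ht1 : t - 1 = (t - 2) + 1 := by omega
    rw [ht1, harm_succ]
    have hc : ((t - 2 : ℕ) : ℝ) + 1 = (t : ℝ) - 1 := by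
      have h2 : (2 : ℕ) ≤ t := ht2
      push_cast [Nat.cast_sub h2]
      ring
    rw [hc]
  have htpos : (0 : ℝ) < (t : ℝ) - 1 := by
    have : (2 : ℝ) ≤ (t : ℝ) := by exact_mod_cast ht2
    linarith
  have hLHS : ((t : ℝ) - 1) * ε * (g t - g (t - 1)) = 1.3 * ε ^ 2 := by
    rw [hgt, hgtm, hstep]
    field_simp
    ring
  -- bound ε * harm (t-1) ≤ 1/10
  have hbound : ε * harm (t - 1) ≤ 1 / 10 := by
    have := harm_mono (show t - 1 ≤ Δ - 1 by omega)
    nlinarith [harm_nonneg (t - 1)]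
  have hge0 : 0 ≤ ε * harm (t - 1) := mul_nonneg hε (harm_nonneg _)
  rw [hLHS, hgt, ge_iff_le]
  have hkey : 0 ≤ 1.3 - (1 + 1.3 * (ε * harm (t - 1))) ^ 2 := by nlinarith
  nlinarith [mul_nonneg (sq_nonneg ε) hkey]
end

section
/- Let 0 < δ < 1, let Δ ≥ 2 be an integer, and let ε_1 ≥ ε_2 ≥ ⋯ ≥ ε_Δ ≥ 0 be reals with ε_1·H_{Δ−1} ≤ δ²/10 and ∑_{j=1}^{Δ} ε_j·H_{Δ−1}(j−1) ≤ 1−δ. Let h_1 be a real with 1 ≤ h_1 ≤ 1 + 0.13·δ², set c = 1 + δ/2, and for 1 ≤ ℓ ≤ Δ define h(ℓ) = h_1/(1 − c·∑_{j=1}^{ℓ} ε_j·H_{ℓ−1}(j−1)) (so h(1) = h_1). Then all the denominators are positive, and for every integer 2 ≤ t ≤ Δ and every real α with 0 ≤ α ≤ ∑_{j=1}^{t} ε_j, we have (t−1)·(h(t) − h(t−1)) ≥ α·h(t)². -/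
lemma harmFrom_nonneg (n m : ℕ) : 0 ≤ harmFrom n m :=
  Finset.sum_nonneg fun j _ => by positivity

lemma harmFrom_mono (m : ℕ) {n n' : ℕ} (h : n ≤ n') : harmFrom n m ≤ harmFrom n' m :=
  Finset.sum_le_sum_of_subset_of_nonneg (Finset.Icc_subset_Icc_right h)
    (fun j _ _ => by positivity)

lemma harmFrom_succ (n m : ℕ) (h : m ≤ n + 1) :
    harmFrom (n+1) m = harmFrom n m + 1 / ((n:ℝ)+1) := by
  unfold harmFrom
  rw [Finset.sum_Icc_succ_top (by omega : max m 1 ≤ n + 1)]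
  push_cast; ring

lemma harmFrom_zero (n : ℕ) : harmFrom n (n+1) = 0 := by
  unfold harmFrom
  rw [Finset.Icc_eq_empty (by omega), Finset.sum_empty]

lemma harm_ge_one {n : ℕ} (hn : 1 ≤ n) : 1 ≤ harm n := by
  have h1 : (1:ℕ) ∈ Finset.Icc 1 n := by simp [hn]
  have := Finset.single_le_sum (f := fun j : ℕ => (1 : ℝ)/(j:ℝ))
    (fun j _ => by positivity) h1
  simpa [harm] using this

lemma sum_step (ε : ℕ → ℝ) (k : ℕ) :
    ∑ j ∈ Finset.Icc 1 (k+2), ε j * harmFrom (k+1) (j-1)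
      = (∑ j ∈ Finset.Icc 1 (k+1), ε j * harmFrom k (j-1))
        + (∑ j ∈ Finset.Icc 1 (k+2), ε j) * (1 / ((k:ℝ)+1)) := by
  have h1 : ∀ j ∈ Finset.Icc 1 (k+2), ε j * harmFrom (k+1) (j-1)
      = ε j * harmFrom k (j-1) + ε j * (1/((k:ℝ)+1)) := by
    intro j hj
    simp only [Finset.mem_Icc] at hj
    rw [harmFrom_succ k (j-1) (by omega), mul_add]
  rw [Finset.sum_congr rfl h1, Finset.sum_add_distrib, ← Finset.sum_mul]
  congr 1
  rw [Finset.sum_Icc_succ_top (by omega : 1 ≤ k+2),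
    show k+2-1 = k+1 from rfl, harmFrom_zero k, mul_zero, add_zero]

set_option maxHeartbeats 1000000 in
/-- Case 2 of the recursive step in the proof of the main theorem. -/
theorem case2_recursion (δ : ℝ) (hδ0 : 0 < δ) (hδ1 : δ < 1)
    (Δ : ℕ) (hΔ : 2 ≤ Δ) (ε : ℕ → ℝ)
    (hnn : ∀ j : ℕ, 1 ≤ j → j ≤ Δ → 0 ≤ ε j)
    (hmono : ∀ j j' : ℕ, 1 ≤ j → j ≤ j' → j' ≤ Δ → ε j' ≤ ε j)
    (h1 : ε 1 * harm (Δ - 1) ≤ δ ^ 2 / 10)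
    (h2 : ∑ j ∈ Finset.Icc 1 Δ, ε j * harmFrom (Δ - 1) (j - 1) ≤ 1 - δ)
    (h₁ : ℝ) (hh1 : 1 ≤ h₁) (hh1' : h₁ ≤ 1 + 0.13 * δ ^ 2)
    (h : ℕ → ℝ)
    (hdef : ∀ ℓ : ℕ, 1 ≤ ℓ → ℓ ≤ Δ →
      h ℓ = h₁ / (1 - (1 + δ / 2) * ∑ j ∈ Finset.Icc 1 ℓ, ε j * harmFrom (ℓ - 1) (j - 1))) :
    (∀ ℓ : ℕ, 1 ≤ ℓ → ℓ ≤ Δ →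
      0 < 1 - (1 + δ / 2) * ∑ j ∈ Finset.Icc 1 ℓ, ε j * harmFrom (ℓ - 1) (j - 1)) ∧
    ∀ t : ℕ, 2 ≤ t → t ≤ Δ → ∀ α : ℝ, 0 ≤ α → α ≤ ∑ j ∈ Finset.Icc 1 t, ε j →
      ((t : ℝ) - 1) * (h t - h (t - 1)) ≥ α * h t ^ 2 := by
  have hc : (0:ℝ) < 1 + δ/2 := by linarith
  have hδδ : δ^2 < δ := by nlinarith
  -- S(ℓ) ≤ 1 - δ
  have hSle : ∀ ℓ : ℕ, 1 ≤ ℓ → ℓ ≤ Δ →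
      ∑ j ∈ Finset.Icc 1 ℓ, ε j * harmFrom (ℓ-1) (j-1) ≤ 1 - δ := by
    intro ℓ h1ℓ hℓΔ
    calc ∑ j ∈ Finset.Icc 1 ℓ, ε j * harmFrom (ℓ-1) (j-1)
        ≤ ∑ j ∈ Finset.Icc 1 ℓ, ε j * harmFrom (Δ-1) (j-1) := by
          apply Finset.sum_le_sum
          intro j hj
          simp only [Finset.mem_Icc] at hj
          exact mul_le_mul_of_nonneg_left (harmFrom_mono _ (by omega))
            (hnn j hj.1 (le_trans hj.2 hℓΔ))
      _ ≤ ∑ j ∈ Finset.Icc 1 Δ, ε j * harmFrom (Δ-1) (j-1) :=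
          Finset.sum_le_sum_of_subset_of_nonneg (Finset.Icc_subset_Icc_right hℓΔ)
            (fun j hj _ => by
              simp only [Finset.mem_Icc] at hj
              exact mul_nonneg (hnn j hj.1 hj.2) (harmFrom_nonneg _ _))
      _ ≤ 1 - δ := h2
  have hpos : ∀ ℓ : ℕ, 1 ≤ ℓ → ℓ ≤ Δ →
      0 < 1 - (1 + δ / 2) * ∑ j ∈ Finset.Icc 1 ℓ, ε j * harmFrom (ℓ - 1) (j - 1) := by
    intro ℓ h1ℓ hℓΔ
    have hu := hSle ℓ h1ℓ hℓΔ
    rcases le_or_gt 0 (∑ j ∈ Finset.Icc 1 ℓ, ε j * harmFrom (ℓ - 1) (j - 1)) with hs | hs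
    · nlinarith
    · nlinarith
  refine ⟨hpos, ?_⟩
  intro t ht2 htΔ α hα0 hαE
  obtain ⟨k, rfl⟩ : ∃ k, t = k + 2 := ⟨t - 2, by omega⟩
  have e1 : k + 2 - 1 = k + 1 := rfl
  have e2 : k + 1 - 1 = k := rfl
  have hkpos : (0:ℝ) < (k:ℝ) + 1 := by positivity
  set S1 : ℝ := ∑ j ∈ Finset.Icc 1 (k+1), ε j * harmFrom k (j-1) with hS1def
  set E : ℝ := ∑ j ∈ Finset.Icc 1 (k+2), ε j with hEdef
  obtain ⟨x, hxE⟩ : ∃ x : ℝ, E = ((k:ℝ)+1) * x := ⟨E/((k:ℝ)+1), by field_simp⟩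
  have hkey0 := sum_step ε k
  rw [← hS1def, ← hEdef] at hkey0
  have hS2 : ∑ j ∈ Finset.Icc 1 (k+2), ε j * harmFrom (k+1) (j-1) = S1 + x := by
    rw [hkey0, hxE]
    field_simp
  -- ε 1 bound
  have hε1nn : 0 ≤ ε 1 := hnn 1 le_rfl (by omega)
  have hharm : 1 ≤ harm (Δ - 1) := harm_ge_one (by omega)
  have hε1 : ε 1 ≤ δ^2/10 := by
    nlinarith [mul_nonneg hε1nn (sub_nonneg.mpr hharm)]
  -- E and x bounds
  have hE0 : 0 ≤ E := Finset.sum_nonneg fun j hj => by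
    simp only [Finset.mem_Icc] at hj; exact hnn j hj.1 (by omega)
  have hEub : E ≤ ((k:ℝ)+2) * ε 1 := by
    have hs : E ≤ ∑ j ∈ Finset.Icc 1 (k+2), ε 1 := by
      apply Finset.sum_le_sum
      intro j hj
      simp only [Finset.mem_Icc] at hj
      exact hmono 1 j le_rfl hj.1 (by omega)
    have hcard : ∑ j ∈ Finset.Icc 1 (k+2), ε 1 = ((k:ℝ)+2) * ε 1 := by
      rw [Finset.sum_const, Nat.card_Icc]
      push_cast
      ring
    linarith [hs, le_of_eq hcard]
  have hx0 : 0 ≤ x := by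
    by_contra h'
    push_neg at h'
    nlinarith [mul_pos hkpos (neg_pos.mpr h')]
  have hxub : x ≤ δ^2/5 := by
    have h2e : ((k:ℝ)+1) * x ≤ ((k:ℝ)+2) * ε 1 := by rw [← hxE]; exact hEub
    have h3e : ((k:ℝ)+2) * ε 1 ≤ 2*((k:ℝ)+1) * ε 1 := by
      nlinarith [mul_nonneg (Nat.cast_nonneg k : (0:ℝ) ≤ (k:ℝ)) hε1nn]
    by_contra h'
    push_neg at h'
    nlinarith [mul_pos hkpos (show (0:ℝ) < x - 2 * ε 1 by linarith)]
  -- denominators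
  have hD1pos := hpos (k+1) (by omega) (by omega)
  rw [e2, ← hS1def] at hD1pos
  have hD2pos := hpos (k+2) (by omega) htΔ
  rw [e1, hS2] at hD2pos
  have hS2le := hSle (k+2) (by omega) htΔ
  rw [e1, hS2] at hS2le
  -- rewrite h values
  have hht : h (k+2) = h₁ / (1 - (1+δ/2) * (S1 + x)) := by
    rw [hdef (k+2) (by omega) htΔ, e1, hS2]
  have hht1 : h (k+1) = h₁ / (1 - (1+δ/2) * S1) := by
    rw [hdef (k+1) (by omega) (by omega), e2, ← hS1def]
  -- key inequality : c·D2 ≥ h₁·D1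
  have hch : (1+δ/2) - h₁ ≥ δ/2 - 0.13*δ^2 := by linarith
  have hch0 : 0 < (1+δ/2) - h₁ := by linarith [hch, hδδ, hδ0]
  have hD1ge : 1 - (1+δ/2)*S1 ≥ δ/2 + δ^2/2 + (1+δ/2)*x := by
    nlinarith [mul_le_mul_of_nonneg_left hS2le hc.le]
  have hkey : (1+δ/2) * (1 - (1+δ/2)*(S1+x)) ≥ h₁ * (1 - (1+δ/2)*S1) := by
    have expand : (1+δ/2) * (1 - (1+δ/2)*(S1+x)) - h₁ * (1 - (1+δ/2)*S1)
        = ((1+δ/2) - h₁) * (1 - (1+δ/2)*S1) - (1+δ/2)^2 * x := by ring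
    rw [ge_iff_le, ← sub_nonneg, expand]
    have step : ((1+δ/2) - h₁) * (1 - (1+δ/2)*S1)
        ≥ ((1+δ/2) - h₁) * (δ/2 + δ^2/2 + (1+δ/2)*x) :=
      mul_le_mul_of_nonneg_left hD1ge hch0.le
    have hch1 : (1+δ/2) * h₁ ≤ (1+δ/2) * (1+0.13*δ^2) :=
      mul_le_mul_of_nonneg_left hh1' hc.le
    have hch1pos : (0:ℝ) < (1+δ/2) * h₁ := mul_pos hc (lt_of_lt_of_le one_pos hh1)
    have hchx : (1+δ/2) * h₁ * x ≤ (1+δ/2) * (1+0.13*δ^2) * (δ^2/5) :=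
      calc (1+δ/2) * h₁ * x ≤ (1+δ/2) * h₁ * (δ^2/5) :=
            mul_le_mul_of_nonneg_left hxub hch1pos.le
        _ ≤ (1+δ/2) * (1+0.13*δ^2) * (δ^2/5) :=
            mul_le_mul_of_nonneg_right hch1 (by positivity)
    have hP : (δ/2 - 0.13*δ^2)*(δ/2 + δ^2/2) - (1+δ/2)*(1+0.13*δ^2)*(δ^2/5) ≥ 0 := by
      nlinarith [mul_nonneg (mul_nonneg (mul_nonneg hδ0.le hδ0.le) hδ0.le)
          (sub_nonneg.mpr hδ1.le),
        mul_nonneg (mul_nonneg (mul_nonneg (mul_nonneg hδ0.le hδ0.le) hδ0.le) hδ0.le)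
          (sub_nonneg.mpr hδ1.le),
        mul_nonneg (mul_nonneg hδ0.le hδ0.le) (sub_nonneg.mpr hδ1.le),
        mul_pos hδ0 hδ0]
    have hlow : ((1+δ/2) - h₁) * (δ/2 + δ^2/2) ≥ (δ/2 - 0.13*δ^2) * (δ/2 + δ^2/2) := by
      apply mul_le_mul_of_nonneg_right hch
      positivity
    nlinarith [step, hchx, hP, hlow]
  -- final computation
  have hcast : ((k+2:ℕ):ℝ) - 1 = (k:ℝ) + 1 := by push_cast; ring
  rw [e1, hcast, hht, hht1]
  set D1 : ℝ := 1 - (1+δ/2)*S1 with hD1def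
  set D2 : ℝ := 1 - (1+δ/2)*(S1+x) with hD2def
  have hD2eq' : D2 = D1 - (1+δ/2)*x := by rw [hD1def, hD2def]; ring
  clear_value D1 D2
  have hαE' : α ≤ ((k:ℝ)+1) * x := by rw [← hxE]; exact hαE
  have hdiff : h₁/D2 - h₁/D1 = (h₁*((1+δ/2)*x))/(D1*D2) := by
    rw [div_sub_div _ _ hD2pos.ne' hD1pos.ne']
    have hnumer : h₁*D1 - D2*h₁ = h₁*((1+δ/2)*x) := by rw [hD2eq']; ring
    rw [hnumer, mul_comm D2 D1]
  have hrw1 : α * (h₁/D2)^2 = (α*h₁^2)/(D2^2) := by rw [div_pow]; ring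
  have hrw2 : ((k:ℝ)+1) * ((h₁*((1+δ/2)*x))/(D1*D2))
      = (((k:ℝ)+1)*(h₁*((1+δ/2)*x)))/(D1*D2) := by ring
  rw [hdiff, hrw2, ge_iff_le, hrw1, div_le_div_iff₀ (by positivity) (by positivity)]
  nlinarith [mul_nonneg (mul_nonneg (mul_nonneg hα0 (by linarith : (0:ℝ) ≤ h₁)) hD2pos.le)
      (sub_nonneg.mpr hkey),
    mul_nonneg (mul_nonneg (sub_nonneg.mpr hαE')
      (mul_nonneg (mul_nonneg (by linarith : (0:ℝ) ≤ h₁) hc.le) hD2pos.le)) hD2pos.le]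
end

section
/- Let G = (V,E) be a finite connected weighted graph with nonnegative edge weights w, let d_w(x) = ∑_y w({x,y}), vol(S) = ∑_{x∈S} d_w(x) for S ⊆ V, and let λ2 be the second largest eigenvalue of the transition matrix P(x,y) = w({x,y})/d_w(x) of the simple random walk. Then for every S ⊆ V, ∑_{x∈S} ∑_{y∈S} w({x,y}) − vol(S)²/vol(V) ≤ λ2·(vol(S) − vol(S)²/vol(V)); in particular, if λ2 ≥ 0 then ∑_{x∈S} ∑_{y∈S} w({x,y}) − vol(S)²/vol(V) ≤ λ2·vol(S). -/
open Finset

/-- A harmonic function w.r.t. a connected nonnegative weight is constant. -/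
private lemma harmonic_constant {V : Type*} [Fintype V] [Nonempty V]
    (w : V → V → ℝ) (hnn : ∀ x y, 0 ≤ w x y)
    (hconn : ∀ x y : V, Relation.ReflTransGen (fun a b => 0 < w a b) x y)
    (g : V → ℝ) (hg : ∀ x, ∑ y, w x y * g y = (∑ y, w x y) * g x) :
    ∀ x y, g x = g y := by
  obtain ⟨x0, -, hx0⟩ := Finset.exists_max_image Finset.univ g
    ⟨Classical.arbitrary V, Finset.mem_univ _⟩
  suffices h : ∀ x, g x = g x0 by intro x y; rw [h x, h y]
  have key : ∀ a b, g a = g x0 → 0 < w a b → g b = g x0 := by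
    intro a b ha hab
    have hsum : ∑ y, w a y * (g x0 - g y) = 0 := by
      simp only [mul_sub, Finset.sum_sub_distrib, hg a, ← Finset.sum_mul, ha]
      ring
    have hterm := (Finset.sum_eq_zero_iff_of_nonneg
      (fun y _ => mul_nonneg (hnn a y) (sub_nonneg.mpr (hx0 y (Finset.mem_univ y))))).mp
      hsum b (Finset.mem_univ b)
    have := (mul_eq_zero.mp hterm).resolve_left (ne_of_gt hab)
    linarith [sub_eq_zero.mp this]
  intro x
  induction hconn x0 x with
  | refl => rfl
  | tail hab hbc ih => exact key _ _ ih hbc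

/-- Any real eigenvalue of the random walk matrix has absolute value at most 1. -/
private lemma eigenvalue_abs_le_one {V : Type*} [Fintype V] [Nonempty V]
    (w : V → V → ℝ) (hnn : ∀ x y, 0 ≤ w x y) (hd : ∀ x, 0 < ∑ y, w x y)
    (μ : ℝ) (g : V → ℝ) (hg0 : g ≠ 0)
    (hg : ∀ x, ∑ y, w x y * g y = μ * ((∑ y, w x y) * g x)) : |μ| ≤ 1 := by
  obtain ⟨x0, -, hx0⟩ := Finset.exists_max_image Finset.univ (fun x => |g x|)
    ⟨Classical.arbitrary V, Finset.mem_univ _⟩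
  have hgx0 : 0 < |g x0| := by
    rcases lt_or_ge 0 |g x0| with h | h
    · exact h
    · exfalso; apply hg0; funext z
      have := hx0 z (Finset.mem_univ z)
      have : |g z| ≤ 0 := le_trans this h
      simpa using le_antisymm this (abs_nonneg _)
  have hkey : |μ| * ((∑ y, w x0 y) * |g x0|) ≤ (∑ y, w x0 y) * |g x0| := by
    calc |μ| * ((∑ y, w x0 y) * |g x0|) = |μ * ((∑ y, w x0 y) * g x0)| := by
          rw [abs_mul, abs_mul, abs_of_pos (hd x0)]
      _ = |∑ y, w x0 y * g y| := by rw [hg x0]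
      _ ≤ ∑ y, |w x0 y * g y| := Finset.abs_sum_le_sum_abs _ _
      _ ≤ ∑ y, w x0 y * |g x0| := by
          refine Finset.sum_le_sum fun y _ => ?_
          rw [abs_mul, abs_of_nonneg (hnn x0 y)]
          exact mul_le_mul_of_nonneg_left (hx0 y (Finset.mem_univ y)) (hnn x0 y)
      _ = (∑ y, w x0 y) * |g x0| := by rw [Finset.sum_mul]
  have hpos : 0 < (∑ y, w x0 y) * |g x0| := mul_pos (hd x0) hgx0
  nlinarith

/-- The second largest eigenvalue of a random-walk transition matrix `P`: the largest point of
the real spectrum of `P` lying below the trivial top eigenvalue `1`. -/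
noncomputable def lambda2 {n : Type*} [Fintype n] [DecidableEq n] (P : Matrix n n ℝ) : ℝ :=
  sSup {μ : ℝ | μ < 1 ∧ μ ∈ spectrum ℝ P}

/-- **Weighted expander mixing lemma** (one sided). Here `∑ x ∈ S, ∑ y, w x y` is `vol(S)`,
`∑ x, ∑ y, w x y` is `vol(V)` and `∑ x ∈ S, ∑ y ∈ S, w x y` counts the (weighted) edges inside
`S` twice. -/
theorem expander_mixing_lemma
    {V : Type*} [Fintype V] [DecidableEq V] [Nonempty V]
    (w : V → V → ℝ) (hsymm : ∀ x y, w x y = w y x) (hnn : ∀ x y, 0 ≤ w x y)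
    (hconn : ∀ x y : V, Relation.ReflTransGen (fun a b => 0 < w a b) x y)
    (S : Finset V) :
    (∑ x ∈ S, ∑ y ∈ S, w x y) - (∑ x ∈ S, ∑ y, w x y) ^ 2 / (∑ x, ∑ y, w x y) ≤
      lambda2 (Matrix.of fun x y => w x y / ∑ z, w x z) *
        ((∑ x ∈ S, ∑ y, w x y) - (∑ x ∈ S, ∑ y, w x y) ^ 2 / (∑ x, ∑ y, w x y)) ∧
    (0 ≤ lambda2 (Matrix.of fun x y => w x y / ∑ z, w x z) →
      (∑ x ∈ S, ∑ y ∈ S, w x y) - (∑ x ∈ S, ∑ y, w x y) ^ 2 / (∑ x, ∑ y, w x y) ≤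
        lambda2 (Matrix.of fun x y => w x y / ∑ z, w x z) * (∑ x ∈ S, ∑ y, w x y)) := by
  classical
  by_cases hV : Subsingleton V
  · rcases S.eq_empty_or_nonempty with rfl | ⟨a, ha⟩
    · simp
    · have hSuniv : S = Finset.univ := by
        apply Finset.eq_univ_of_forall
        intro x; rwa [Subsingleton.elim x a]
      subst hSuniv
      set c : ℝ := ∑ x, ∑ y, w x y with hc
      have h0 : c - c ^ 2 / c = 0 := by
        rcases eq_or_ne c 0 with h | h
        · simp [h]
        · field_simp; ring
      have hcnn : 0 ≤ c := Finset.sum_nonneg fun x _ =>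
        Finset.sum_nonneg fun y _ => hnn x y
      rw [h0]
      constructor
      · simp
      · intro hl; exact mul_nonneg hl hcnn
  · have : Nontrivial V := not_subsingleton_iff_nontrivial.mp hV
    have hdpos : ∀ x : V, 0 < ∑ y, w x y := by
      intro x
      obtain ⟨y, hy⟩ := exists_ne x
      rcases (hconn x y).cases_head with h | ⟨z, hz, -⟩
      · exact absurd h.symm hy
      · exact lt_of_lt_of_le hz (Finset.single_le_sum (fun i _ => hnn x i) (Finset.mem_univ z))
    set s : V → ℝ := fun x => Real.sqrt (∑ y, w x y) with hs_def
    have hs : ∀ x, 0 < s x := fun x => Real.sqrt_pos.mpr (hdpos x)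
    have hss : ∀ x, s x * s x = ∑ y, w x y := fun x => Real.mul_self_sqrt (hdpos x).le
    set N : Matrix V V ℝ := Matrix.of (fun x y => w x y / (s x * s y)) with hN_def
    have hNapp : ∀ x y, N x y = w x y / (s x * s y) := fun x y => rfl
    have hNsymm : ∀ x y, N x y = N y x := by
      intro x y; simp only [hNapp, hsymm x y, mul_comm (s x) (s y)]
    have hN : N.IsHermitian := Matrix.ext fun x y => by
      simp only [Matrix.conjTranspose_apply, star_trivial]; exact hNsymm y x
    set B := hN.eigenvectorBasis with hB_def
    set μ := hN.eigenvalues with hmu_def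
    have hmulvec := fun i => hN.mulVec_eigenvectorBasis i
    have inner_eq : ∀ a b : EuclideanSpace ℝ V, (inner ℝ a b : ℝ) = ∑ x, a x * b x := by
      intro a b
      simp [PiLp.inner_apply, RCLike.inner_apply, mul_comm]
    have hBo : ∀ i j, (∑ x, B i x * B j x) = if i = j then (1:ℝ) else 0 := by
      intro i j
      have h := B.orthonormal
      rw [orthonormal_iff_ite] at h
      rw [← inner_eq]
      exact h i j
    have hPar : ∀ a b : EuclideanSpace ℝ V,
        ∑ x, a x * b x = ∑ i, (∑ x, a x * B i x) * (∑ x, B i x * b x) := by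
      intro a b
      rw [← inner_eq, ← B.sum_inner_mul_inner a b]
      refine Finset.sum_congr rfl fun i _ => ?_
      rw [inner_eq, inner_eq]
    have hmulvec : ∀ (i : V) (x : V), (∑ y, N x y * B i y) = μ i * B i x := by
      intro i x
      have h := congrFun (hN.mulVec_eigenvectorBasis i) x
      simpa [Matrix.mulVec, dotProduct, WithLp.equiv] using h
    have hswap : ∀ a b : V → ℝ,
        ∑ x, a x * (∑ y, N x y * b y) = ∑ x, (∑ y, N x y * a y) * b x := by
      intro a b
      calc ∑ x, a x * ∑ y, N x y * b y = ∑ x, ∑ y, a x * (N x y * b y) := by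
            simp [Finset.mul_sum]
        _ = ∑ y, ∑ x, a x * (N x y * b y) := Finset.sum_comm
        _ = ∑ y, (∑ x, N y x * a x) * b y := by
            refine Finset.sum_congr rfl fun y _ => ?_
            rw [Finset.sum_mul]
            refine Finset.sum_congr rfl fun x _ => ?_
            rw [hNsymm x y]; ring
    have hquad : ∀ a : EuclideanSpace ℝ V,
        ∑ x, a x * (∑ y, N x y * a y) = ∑ i, μ i * (∑ x, B i x * a x) ^ 2 := by
      intro a
      have hP := hPar a (WithLp.toLp 2 (fun x => ∑ y, N x y * a y))
      dsimp only at hP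
      rw [hP]
      refine Finset.sum_congr rfl fun i _ => ?_
      have h1 : ∑ x, B i x * (∑ y, N x y * a y) = μ i * ∑ x, B i x * a x := by
        rw [hswap (fun x => B i x) a]
        calc ∑ x, (∑ y, N x y * B i y) * a x = ∑ x, (μ i * B i x) * a x := by
              refine Finset.sum_congr rfl fun x _ => ?_
              rw [hmulvec i x]
          _ = μ i * ∑ x, B i x * a x := by rw [Finset.mul_sum]; exact Finset.sum_congr rfl fun x _ => by ring
      rw [h1]
      have h2 : ∑ x, a x * B i x = ∑ x, B i x * a x :=
        Finset.sum_congr rfl fun x _ => mul_comm _ _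
      rw [h2]; ring
    have hnorm : ∀ a : EuclideanSpace ℝ V,
        ∑ x, a x * a x = ∑ i, (∑ x, B i x * a x) ^ 2 := by
      intro a
      rw [hPar a a]
      refine Finset.sum_congr rfl fun i _ => ?_
      rw [sq]
      congr 1
      exact Finset.sum_congr rfl fun x _ => mul_comm _ _
    set u : EuclideanSpace ℝ V := WithLp.toLp 2 (fun x => if x ∈ S then s x else 0 : V → ℝ) with hu_def
    have hu_app : ∀ x, u x = if x ∈ S then s x else 0 := fun x => rfl
    have hsum_uu : ∑ x, u x * u x = ∑ x ∈ S, ∑ y, w x y := by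
      have h : ∀ x, u x * u x = if x ∈ S then (∑ y, w x y) else 0 := by
        intro x; by_cases hx : x ∈ S <;> simp [hu_app, hx, hss x]
      rw [Finset.sum_congr rfl fun x _ => h x, Finset.sum_ite_mem, Finset.univ_inter]
    have hsum_su : ∑ x, s x * u x = ∑ x ∈ S, ∑ y, w x y := by
      have h : ∀ x, s x * u x = if x ∈ S then (∑ y, w x y) else 0 := by
        intro x; by_cases hx : x ∈ S <;> simp [hu_app, hx, hss x]
      rw [Finset.sum_congr rfl fun x _ => h x, Finset.sum_ite_mem, Finset.univ_inter]
    have hsum_ss : ∑ x, s x * s x = ∑ x, ∑ y, w x y :=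
      Finset.sum_congr rfl fun x _ => hss x
    have hsum_uNu : ∑ x, u x * (∑ y, N x y * u y) = ∑ x ∈ S, ∑ y ∈ S, w x y := by
      have h : ∀ x, u x * (∑ y, N x y * u y) = if x ∈ S then (∑ y ∈ S, w x y) else 0 := by
        intro x
        by_cases hx : x ∈ S
        · simp only [hu_app, hx, if_true]
          rw [Finset.mul_sum]
          have h2 : ∀ y, s x * (N x y * u y) = if y ∈ S then w x y else 0 := by
            intro y
            by_cases hy : y ∈ S
            · simp only [hu_app, hy, if_true, hNapp]
              field_simp [(hs x).ne', (hs y).ne']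
            · simp [hu_app, hy]
          rw [Finset.sum_congr rfl fun y _ => h2 y, Finset.sum_ite_mem, Finset.univ_inter]
        · simp [hu_app, hx]
      rw [Finset.sum_congr rfl fun x _ => h x, Finset.sum_ite_mem, Finset.univ_inter]
    have hNs : ∀ x, (∑ y, N x y * s y) = s x := by
      intro x
      have h : ∀ y, N x y * s y = w x y / s x := by
        intro y
        rw [hNapp, mul_comm (s x) (s y), ← div_div, div_right_comm, div_mul_cancel₀ _ (hs y).ne']
      rw [Finset.sum_congr rfl fun y _ => h y, ← Finset.sum_div, ← hss x,
        mul_div_assoc, div_self (hs x).ne', mul_one]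
    -- eigenvalue facts
    have hBne : ∀ i, (fun x => B i x / s x) ≠ 0 := by
      intro i h
      have h1 := hBo i i
      rw [if_pos rfl] at h1
      have h0 : ∀ x, B i x = 0 := by
        intro x
        have := congrFun h x
        simp only [Pi.zero_apply] at this
        rcases div_eq_zero_iff.mp this with h' | h'
        · exact h'
        · exact absurd h' (hs x).ne'
      simp [h0] at h1
    have hgrel : ∀ i x, ∑ y, w x y * (B i y / s y) = μ i * ((∑ y, w x y) * (B i x / s x)) := by
      intro i x
      have hx := hmulvec i x
      have h1 : ∑ y, w x y * (B i y / s y) = s x * ∑ y, N x y * B i y := by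
        rw [Finset.mul_sum]
        refine Finset.sum_congr rfl fun y _ => ?_
        rw [hNapp]
        field_simp [(hs x).ne', (hs y).ne']
      rw [h1, hx, ← hss x]
      field_simp [(hs x).ne']
    have heig_le : ∀ i, μ i ≤ 1 := by
      intro i
      have h := eigenvalue_abs_le_one w hnn hdpos (μ i) _ (hBne i) (hgrel i)
      exact le_trans (le_abs_self _) h
    have heig_one : ∀ i, μ i = 1 → ∃ k, ∀ x, B i x = k * s x := by
      intro i hi
      have hharm : ∀ x, ∑ y, w x y * (B i y / s y) = (∑ y, w x y) * (B i x / s x) := by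
        intro x; rw [hgrel i x, hi, one_mul]
      have hconst := harmonic_constant w hnn hconn _ hharm
      refine ⟨B i (Classical.arbitrary V) / s (Classical.arbitrary V), fun x => ?_⟩
      have h := hconst x (Classical.arbitrary V)
      rw [← h]
      rw [div_mul_eq_mul_div, mul_div_assoc, div_self (hs x).ne', mul_one]
    have hvV_pos : 0 < ∑ x, ∑ y, w x y :=
      Finset.sum_pos (fun x _ => hdpos x) Finset.univ_nonempty
    -- coefficients of s in the eigenbasis
    have hts : ∑ i, (∑ x, B i x * s x) ^ 2 = ∑ x, ∑ y, w x y := by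
      rw [← hnorm (WithLp.toLp 2 s)]; exact hsum_ss
    have htmu : ∑ i, μ i * (∑ x, B i x * s x) ^ 2 = ∑ x, ∑ y, w x y := by
      have h := hquad (WithLp.toLp 2 s)
      rw [Finset.sum_congr rfl (fun x _ => by rw [hNs x] : ∀ x ∈ Finset.univ,
        (WithLp.toLp 2 s) x * (∑ y, N x y * s y) = s x * s x)] at h
      rw [← h, hsum_ss]
    have hzero : ∀ i, (1 - μ i) * (∑ x, B i x * s x) ^ 2 = 0 := by
      have hsum0 : ∑ i, (1 - μ i) * (∑ x, B i x * s x) ^ 2 = 0 := by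
        simp only [sub_mul, one_mul, Finset.sum_sub_distrib, hts, htmu, sub_self]
      exact fun i => (Finset.sum_eq_zero_iff_of_nonneg (fun j _ =>
        mul_nonneg (by linarith [heig_le j]) (sq_nonneg _))).mp hsum0 i (Finset.mem_univ i)
    have hex : ∃ i, μ i = 1 := by
      by_contra hcon
      push_neg at hcon
      have hzt : ∀ i, (∑ x, B i x * s x) ^ 2 = 0 := by
        intro i
        rcases mul_eq_zero.mp (hzero i) with h' | h'
        · exact absurd (by linarith : μ i = 1) (hcon i)
        · exact h'
      rw [← hts] at hvV_pos
      simp [hzt] at hvV_pos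
    obtain ⟨i0, hi0⟩ := hex
    obtain ⟨k0, hk0⟩ := heig_one i0 hi0
    have hksq : ∀ i k, (∀ x, B i x = k * s x) → k ^ 2 * (∑ x, ∑ y, w x y) = 1 := by
      intro i k hk
      have h1 := hBo i i
      rw [if_pos rfl] at h1
      calc k ^ 2 * (∑ x, ∑ y, w x y) = ∑ x, (k * s x) * (k * s x) := by
            rw [← hsum_ss, Finset.mul_sum]
            exact Finset.sum_congr rfl fun x _ => by ring
        _ = ∑ x, B i x * B i x := Finset.sum_congr rfl fun x _ => by rw [hk x]
        _ = 1 := h1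
    have hk0sq := hksq i0 k0 hk0
    have hk0ne : k0 ≠ 0 := by
      intro h; rw [h] at hk0sq; simp at hk0sq
    have hgap : ∀ i, i ≠ i0 → μ i < 1 := by
      intro i hi
      rcases lt_or_eq_of_le (heig_le i) with h | h
      · exact h
      exfalso
      obtain ⟨k, hk⟩ := heig_one i h
      have hkne : k ≠ 0 := by
        intro h'; have := hksq i k hk; rw [h'] at this; simp at this
      have horth := hBo i i0
      rw [if_neg hi] at horth
      have hkk : (k * k0) * (∑ x, ∑ y, w x y) = 0 := by
        rw [← horth, ← hsum_ss, Finset.mul_sum]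
        exact Finset.sum_congr rfl fun x _ => by rw [hk x, hk0 x]; ring
      rcases mul_eq_zero.mp hkk with h' | h'
      · rcases mul_eq_zero.mp h' with h'' | h''
        · exact hkne h''
        · exact hk0ne h''
      · exact hvV_pos.ne' h'
    have hci0 : (∑ x, B i0 x * u x) ^ 2
        = (∑ x ∈ S, ∑ y, w x y) ^ 2 / (∑ x, ∑ y, w x y) := by
      have h1 : ∑ x, B i0 x * u x = k0 * ∑ x ∈ S, ∑ y, w x y := by
        calc ∑ x, B i0 x * u x = ∑ x, k0 * (s x * u x) := by
              refine Finset.sum_congr rfl fun x _ => ?_; rw [hk0 x]; ring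
          _ = k0 * ∑ x, s x * u x := by rw [Finset.mul_sum]
          _ = k0 * ∑ x ∈ S, ∑ y, w x y := by rw [hsum_su]
      rw [h1, mul_pow]
      have h2 : k0 ^ 2 = 1 / (∑ x, ∑ y, w x y) := by
        rw [eq_div_iff hvV_pos.ne']; exact hk0sq
      rw [h2]; ring
    set P : Matrix V V ℝ := Matrix.of (fun x y => w x y / ∑ z, w x z) with hP_def
    have hspec : ∀ i, i ≠ i0 → μ i ≤ lambda2 P := by
      intro i hi
      have hglt := hgap i hi
      have hPg : P.mulVec (fun x => B i x / s x) = μ i • (fun x => B i x / s x) := by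
        funext x
        simp only [Matrix.mulVec, dotProduct, hP_def, Matrix.of_apply,
          Pi.smul_apply, smul_eq_mul]
        have h1 : ∑ y, w x y / (∑ z, w x z) * (B i y / s y)
            = (∑ y, w x y * (B i y / s y)) / (∑ z, w x z) := by
          rw [Finset.sum_div]; exact Finset.sum_congr rfl fun y _ => by ring
        rw [h1, hgrel i x, mul_div_assoc, mul_comm (∑ y, w x y) (B i x / s x),
          mul_div_assoc, div_self (hdpos x).ne', mul_one]
      have hEig : Module.End.HasEigenvalue (Matrix.toLinAlgEquiv' P) (μ i) := by
        apply Module.End.hasEigenvalue_of_hasEigenvector (x := fun x => B i x / s x)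
        refine ⟨Module.End.mem_eigenspace_iff.mpr ?_, hBne i⟩
        rw [Matrix.toLinAlgEquiv'_apply, hPg]
      have hmem : μ i ∈ spectrum ℝ P := by
        have h2 := Module.End.hasEigenvalue_iff_mem_spectrum.mp hEig
        rwa [AlgEquiv.spectrum_eq] at h2
      exact le_csSup ⟨1, fun z hz => hz.1.le⟩ ⟨hglt, hmem⟩
    -- final assembly
    have hEexp : ∑ x ∈ S, ∑ y ∈ S, w x y = ∑ i, μ i * (∑ x, B i x * u x) ^ 2 := by
      rw [← hsum_uNu]; exact hquad u
    have hvSexp : ∑ x ∈ S, ∑ y, w x y = ∑ i, (∑ x, B i x * u x) ^ 2 := by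
      rw [← hsum_uu]; exact hnorm u
    have hmain : (∑ x ∈ S, ∑ y ∈ S, w x y) - (∑ x ∈ S, ∑ y, w x y) ^ 2 / (∑ x, ∑ y, w x y)
        ≤ lambda2 P * ((∑ x ∈ S, ∑ y, w x y) - (∑ x ∈ S, ∑ y, w x y) ^ 2 / (∑ x, ∑ y, w x y)) := by
      have h1 : (∑ x ∈ S, ∑ y ∈ S, w x y) - (∑ x ∈ S, ∑ y, w x y) ^ 2 / (∑ x, ∑ y, w x y)
          = ∑ i ∈ Finset.univ.erase i0, μ i * (∑ x, B i x * u x) ^ 2 := by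
        rw [hEexp, ← hci0,
          ← Finset.add_sum_erase Finset.univ (fun i => μ i * (∑ x, B i x * u x) ^ 2)
            (Finset.mem_univ i0), hi0]
        ring
      have h2 : (∑ x ∈ S, ∑ y, w x y) - (∑ x ∈ S, ∑ y, w x y) ^ 2 / (∑ x, ∑ y, w x y)
          = ∑ i ∈ Finset.univ.erase i0, (∑ x, B i x * u x) ^ 2 := by
        rw [← hci0, hvSexp,
          ← Finset.add_sum_erase Finset.univ (fun i => (∑ x, B i x * u x) ^ 2)
            (Finset.mem_univ i0)]
        ring
      rw [h1, h2, Finset.mul_sum]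
      refine Finset.sum_le_sum fun i hi => ?_
      exact mul_le_mul_of_nonneg_right (hspec i (Finset.ne_of_mem_erase hi)) (sq_nonneg _)
    refine ⟨hmain, fun hl => le_trans hmain ?_⟩
    have h3 : 0 ≤ (∑ x ∈ S, ∑ y, w x y) ^ 2 / (∑ x, ∑ y, w x y) :=
      div_nonneg (sq_nonneg _) hvV_pos.le
    apply mul_le_mul_of_nonneg_left _ hl
    linarith
end

section
/- Fix an integer d ≥ 2 and a real λ > 0. Let X be the 2d-partite pure (2d−1)-dimensional complex on ground set {(i,b) : 1 ≤ i ≤ 2d, b ∈ {0,1}} with parts T_i = {(i,0),(i,1)}, whose facets are the sets τ containing exactly one of (i,0),(i,1) for each i and such that I(τ) = {i : (i,1) ∈ τ} satisfies I(τ) ⊆ {1,…,d} or I(τ) ⊆ {d+1,…,2d} (so I(τ) is an independent set of the complete bipartite graph K_{d,d}), with all subsets of facets as faces; let π(τ) be proportional to λ^{|I(τ)|}. Then γ_2 = λ/(1+λ): every face τ of co-dimension 2 satisfies λ2(P_τ) ≤ λ/(1+λ), and the face τ = {(i,0) : 2 ≤ i ≤ 2d−1} satisfies λ2(P_τ) =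 λ/(1+λ). -/
open Finset in
/-- A pure `d`-dimensional weighted simplicial complex, given by its facets (all of
cardinality `d+1`) together with a full-support probability distribution `pi` on the facets.
The faces of the complex are all subsets of facets. -/
structure WeightedComplex (V : Type*) [Fintype V] [DecidableEq V] (d : ℕ) where
  facets : Finset (Finset V)
  facets_nonempty : facets.Nonempty
  pure : ∀ τ ∈ facets, τ.card = d + 1
  pi : Finset V → ℝ
  pi_pos : ∀ τ ∈ facets, 0 < pi τ
  pi_eq_zero : ∀ τ, τ ∉ facets → pi τ = 0
  pi_sum_one : ∑ τ ∈ facets, pi τ = 1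

namespace WeightedComplex

variable {V : Type*} [Fintype V] [DecidableEq V] {d : ℕ}

/-- `σ` is a face of the complex (a subset of some facet). -/
def IsFace (K : WeightedComplex V d) (σ : Finset V) : Prop :=
  ∃ η ∈ K.facets, σ ⊆ η

/-- Total `π`-weight of the facets containing `τ`. -/
noncomputable def faceWeight (K : WeightedComplex V d) (τ : Finset V) : ℝ :=
  ∑ η ∈ K.facets.filter (fun η => τ ⊆ η), K.pi η

/-- `Pr_{σ ∼ π_τ}[{x,y} ⊆ σ]`: the weight of the edge `{x,y}` in the 1-skeleton of the
link of `τ`. -/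
noncomputable def linkWeight (K : WeightedComplex V d) (τ : Finset V) (x y : V) : ℝ :=
  if x = y ∨ x ∈ τ ∨ y ∈ τ then 0
  else (∑ η ∈ K.facets.filter (fun η => τ ⊆ η ∧ x ∈ η ∧ y ∈ η), K.pi η) / K.faceWeight τ

/-- The transition probability matrix `P_τ` of the simple random walk on the 1-skeleton of
the link `(X_τ, π_τ)`, padded with zeros outside the `X_τ(0) × X_τ(0)` block. -/
noncomputable def walkMatrix (K : WeightedComplex V d) (τ : Finset V) : Matrix V V ℝ :=
  Matrix.of fun x y => K.linkWeight τ x y / ∑ z, K.linkWeight τ x z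

/-- `Pr_{σ ∼ π_τ}[x ∈ σ]`. -/
noncomputable def probMem (K : WeightedComplex V d) (τ : Finset V) (x : V) : ℝ :=
  if x ∈ τ then 0 else K.faceWeight (insert x τ) / K.faceWeight τ

/-- The vertex marginal `π_{τ,0}(x) = Pr_{σ∼π_τ}[x ∈ σ] / codim(τ)`, viewed as a vector on all
of `V` (zero outside `X_τ(0)`). -/
noncomputable def vertexMarginal (K : WeightedComplex V d) (τ : Finset V) (x : V) : ℝ :=
  ((d + 1 - τ.card : ℕ) : ℝ)⁻¹ * K.probMem τ x

/-- The facets of the link `X_τ`. -/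
def linkFacets (K : WeightedComplex V d) (τ : Finset V) : Finset (Finset V) :=
  (K.facets.filter (fun η => τ ⊆ η)).image (fun η => η \ τ)

/-- The facet distribution `π_τ` of the link of `τ`. -/
noncomputable def linkPi (K : WeightedComplex V d) (τ : Finset V) (σ : Finset V) : ℝ :=
  K.pi (σ ∪ τ) / K.faceWeight τ

/-- The 1-skeleton of the link of every face of co-dimension at least 2 is connected. -/
def TotallyConnected (K : WeightedComplex V d) : Prop :=
  ∀ τ : Finset V, K.IsFace τ → τ.card + 2 ≤ d + 1 →
    ∀ x y : V, x ∉ τ → K.IsFace (insert x τ) → y ∉ τ → K.IsFace (insert y τ) →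
      Relation.ReflTransGen (fun a b => 0 < K.linkWeight τ a b) x y

end WeightedComplex

/-- A `(d+1)`-partite pure `d`-dimensional weighted complex: each vertex has a type in
`Fin (d+1)` and every facet contains exactly one vertex of each type. -/
structure PartiteWeightedComplex (V : Type*) [Fintype V] [DecidableEq V] (d : ℕ)
    extends WeightedComplex V d where
  vtype : V → Fin (d + 1)
  partite : ∀ τ ∈ facets, ∀ i : Fin (d + 1), (τ.filter (fun x => vtype x = i)).card = 1

namespace PartiteWeightedComplex

variable {V : Type*} [Fintype V] [DecidableEq V] {d : ℕ}

/-- `ε_{i,j}`: the maximum of `λ₂(P_τ)` over faces `τ` of type `[d] ∖ {i,j}`. -/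
noncomputable def eps (K : PartiteWeightedComplex V d) (i j : Fin (d + 1)) : ℝ :=
  sSup {r : ℝ | ∃ τ : Finset V, K.toWeightedComplex.IsFace τ ∧
    τ.image K.vtype = Finset.univ \ {i, j} ∧
    r = lambda2 (K.toWeightedComplex.walkMatrix τ)}

/-- `Δ(i)`: the number of `j ≠ i` with `ε_{i,j} > 0`. -/
noncomputable def DeltaAt (K : PartiteWeightedComplex V d) (i : Fin (d + 1)) : ℕ :=
  Set.ncard {j : Fin (d + 1) | j ≠ i ∧ 0 < K.eps i j}

/-- `Δ = max_i Δ(i)`. -/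
noncomputable def DeltaMax (K : PartiteWeightedComplex V d) : ℕ :=
  Finset.univ.sup fun i => K.DeltaAt i

end PartiteWeightedComplex


open Finset

def Fct (d : ℕ) (s : Fin (2*d) → Bool) : Finset (Fin (2*d) × Bool) :=
  Finset.univ.image (fun i => (i, s i))

def Indep (d : ℕ) (s : Fin (2*d) → Bool) : Prop :=
  ∀ i j : Fin (2*d), s i = true → s j = true →
    (((i:ℕ) < d ∧ (j:ℕ) < d) ∨ (d ≤ (i:ℕ) ∧ d ≤ (j:ℕ)))

instance {d : ℕ} (s : Fin (2*d) → Bool) : Decidable (Indep d s) := by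
  unfold Indep; infer_instance

lemma mem_Fct {d : ℕ} {s : Fin (2*d) → Bool} {p : Fin (2*d) × Bool} :
    p ∈ Fct d s ↔ p.2 = s p.1 := by
  constructor
  · rintro h
    simp only [Fct, mem_image, mem_univ, true_and] at h
    obtain ⟨i, hi⟩ := h
    rw [← hi]
  · intro h
    simp only [Fct, mem_image, mem_univ, true_and]
    exact ⟨p.1, by rw [← h]⟩

lemma Indep_mono {d : ℕ} {s t : Fin (2*d) → Bool} (h : ∀ i, t i = true → s i = true)
    (hs : Indep d s) : Indep d t := fun i j hi hj => hs i j (h i hi) (h j hj)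

section Alg
variable {lam μ a0 a1 b0 b1 : ℝ} (hlam : 0 < lam) (hμ1 : μ < 1)
  (hμ2 : lam / (1 + lam) < μ)
  (hne : ¬(a0 = 0 ∧ a1 = 0 ∧ b0 = 0 ∧ b1 = 0))

include hlam hμ2 in
lemma mu_pos : 0 < μ := lt_trans (div_pos hlam (by linarith)) hμ2

include hlam hμ1 hμ2 hne in
lemma alg_nn (e1 : μ * a0 = b0) (e2 : μ * b0 = a0) (h1 : a1 = 0) (h2 : b1 = 0) : False := by
  have hμ0 := mu_pos hlam hμ2
  have h0 : a0 * (μ^2 - 1) = 0 := by linear_combination μ * e1 + e2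
  have ha0 : a0 = 0 := by
    rcases mul_eq_zero.1 h0 with h | h
    · exact h
    · nlinarith [mul_lt_mul_of_pos_left hμ1 hμ0]
  have hb0 : b0 = 0 := by rw [← e1, ha0]; ring
  exact hne ⟨ha0, h1, hb0, h2⟩

include hlam hμ1 hμ2 hne in
lemma alg_pn (e1 : μ * a0 = b0) (e2 : μ * a1 = b0)
    (e3 : μ * b0 * (1 + lam) = a0 + lam * a1) (h2 : b1 = 0) : False := by
  have hμ0 := mu_pos hlam hμ2
  have h0 : b0 * ((μ^2 - 1) * (1 + lam)) = 0 := by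
    linear_combination μ * e3 + e1 + lam * e2
  have hb0 : b0 = 0 := by
    rcases mul_eq_zero.1 h0 with h | h
    · exact h
    · nlinarith [mul_lt_mul_of_pos_left hμ1 hμ0]
  have ha0 : a0 = 0 := by
    rcases mul_eq_zero.1 (show a0 * μ = 0 by linear_combination e1 + hb0) with h | h
    · exact h
    · nlinarith [mul_lt_mul_of_pos_left hμ1 hμ0]
  have ha1 : a1 = 0 := by
    rcases mul_eq_zero.1 (show a1 * μ = 0 by linear_combination e2 + hb0) with h | h
    · exact h
    · nlinarith [mul_lt_mul_of_pos_left hμ1 hμ0]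
  exact hne ⟨ha0, ha1, hb0, h2⟩

include hlam hμ1 hμ2 hne in
lemma alg_ppr (e1 : μ * a0 * (1 + lam) = b0 + lam * b1)
    (e2 : μ * a1 * (1 + lam) = b0 + lam * b1)
    (e3 : μ * b0 * (1 + lam) = a0 + lam * a1)
    (e4 : μ * b1 * (1 + lam) = a0 + lam * a1) : False := by
  have hμ0 := mu_pos hlam hμ2
  have ha : a0 = a1 := by
    rcases mul_eq_zero.1 (show (a0 - a1) * (μ * (1 + lam)) = 0 by
      linear_combination e1 - e2) with h | h
    · linarith [sub_eq_zero.1 h]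
    · nlinarith [mul_lt_mul_of_pos_left hμ1 hμ0]
  have hb : b0 = b1 := by
    rcases mul_eq_zero.1 (show (b0 - b1) * (μ * (1 + lam)) = 0 by
      linear_combination e3 - e4) with h | h
    · linarith [sub_eq_zero.1 h]
    · nlinarith [mul_lt_mul_of_pos_left hμ1 hμ0]
  have e1' : μ * a0 = b0 := by
    rcases mul_eq_zero.1 (show (μ * a0 - b0) * (1 + lam) = 0 by
      linear_combination e1 - lam * hb) with h | h
    · linarith [sub_eq_zero.1 h]
    · nlinarith [mul_lt_mul_of_pos_left hμ1 hμ0]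
  have e3' : μ * b0 = a0 := by
    rcases mul_eq_zero.1 (show (μ * b0 - a0) * (1 + lam) = 0 by
      linear_combination e3 - lam * ha) with h | h
    · linarith [sub_eq_zero.1 h]
    · nlinarith [mul_lt_mul_of_pos_left hμ1 hμ0]
  exact alg_nn hlam hμ1 hμ2
    (by rintro ⟨x1, x2, x3, x4⟩; exact hne ⟨x1, ha ▸ x1, x3, hb ▸ x3⟩) e1' e3' rfl rfl

include hlam hμ1 hμ2 hne in
lemma alg_pp (e1 : μ * a0 * (1 + lam) = b0 + lam * b1)
    (e2 : μ * a1 = b0)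
    (e3 : μ * b0 * (1 + lam) = a0 + lam * a1)
    (e4 : μ * b1 = a0) : False := by
  have hμ0 := mu_pos hlam hμ2
  have hc : lam < μ * (1 + lam) := by
    rwa [div_lt_iff₀ (by linarith : (0:ℝ) < 1 + lam)] at hμ2
  set k : ℝ := μ^2 * (1 + lam) - lam with hk
  have f1 : k * b1 = μ * a1 := by linear_combination e1 - e2 + μ * (1 + lam) * e4
  have f2 : k * a1 = μ * b1 := by linear_combination e3 - e4 + μ * (1 + lam) * e2
  have ha1 : a1 ≠ 0 := by
    rintro h
    have hb1 : b1 = 0 := by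
      have := f2; rw [h] at this
      nlinarith
    apply hne
    refine ⟨?_, h, ?_, hb1⟩
    · rw [← e4, hb1]; ring
    · rw [← e2, h]; ring
  have hk2 : k^2 = μ^2 := by
    have : k^2 * a1 = μ^2 * a1 := by
      linear_combination k * f2 + μ * f1
    exact mul_right_cancel₀ ha1 this
  have : (k - μ) * (k + μ) = 0 := by linear_combination hk2
  rcases mul_eq_zero.1 this with h | h
  · -- k = μ : ((1+lam)μ + lam)(μ - 1) = 0
    have : ((1 + lam) * μ + lam) * (μ - 1) = 0 := by linear_combination h
    rcases mul_eq_zero.1 this with h' | h' <;> nlinarith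
  · -- k = -μ : ((1+lam)μ - lam)(μ + 1) = 0
    have : ((1 + lam) * μ - lam) * (μ + 1) = 0 := by linear_combination h
    rcases mul_eq_zero.1 this with h' | h' <;> nlinarith

end Alg


theorem spec_iff {n : Type*} [Fintype n] [DecidableEq n] (M : Matrix n n ℝ) (μ : ℝ) :
    μ ∈ spectrum ℝ M ↔ ∃ v ≠ 0, M.mulVec v = μ • v := by
  rw [spectrum.mem_iff, Matrix.isUnit_iff_isUnit_det, isUnit_iff_ne_zero, ne_eq, not_not,
    ← Matrix.exists_mulVec_eq_zero_iff]
  apply exists_congr; intro v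
  apply and_congr_right; intro hv
  rw [Matrix.sub_mulVec, sub_eq_zero, Algebra.algebraMap_eq_smul_one,
    Matrix.smul_mulVec, Matrix.one_mulVec]
  exact eq_comm

lemma div_div_div_same {a t W : ℝ} (hW : W ≠ 0) : (a / W) / (t / W) = a / t := by
  rcases eq_or_ne t 0 with h | h
  · rw [h, zero_div, div_zero, div_zero]
  · field_simp



section Main

variable {d : ℕ} {lam : ℝ} (hlam : 0 < lam) {e : ℕ} (he : e + 1 = 2*d)
  (K : PartiteWeightedComplex (Fin (2 * d) × Bool) e)
  (hfacets : ∀ τ : Finset (Fin (2 * d) × Bool), τ ∈ K.facets ↔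
      ((∀ i : Fin (2 * d), ((i, false) ∈ τ ↔ (i, true) ∉ τ)) ∧
       (∀ i j : Fin (2 * d), (i, true) ∈ τ → (j, true) ∈ τ →
         (((i : ℕ) < d ∧ (j : ℕ) < d) ∨ (d ≤ (i : ℕ) ∧ d ≤ (j : ℕ))))))

include hfacets in
lemma facets_iff (η : Finset (Fin (2*d) × Bool)) :
    η ∈ K.facets ↔ ∃ s, Indep d s ∧ η = Fct d s := by
  rw [hfacets]
  constructor
  · rintro ⟨h1, h2⟩
    refine ⟨fun i => decide ((i, true) ∈ η), ?_, ?_⟩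
    · intro i j hi hj
      exact h2 i j (of_decide_eq_true hi) (of_decide_eq_true hj)
    · ext p
      rw [mem_Fct]
      obtain ⟨i, b⟩ := p
      cases b with
      | false =>
        rw [h1 i]
        simp [eq_comm, decide_eq_false_iff_not]
      | true => simp [decide_eq_true_eq, eq_comm]
  · rintro ⟨s, hs, rfl⟩
    constructor
    · intro i
      simp only [mem_Fct]
      cases h : s i <;> simp [h]
    · intro i j hi hj
      rw [mem_Fct] at hi hj
      exact hs i j hi.symm hj.symm

variable {Z : ℝ} (hZ : 0 < Z)
  (hpiZ : ∀ τ ∈ K.facets,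
      K.pi τ = lam ^ ((τ.filter (fun p => p.2 = true)).card) / Z)

def uFun (d : ℕ) (s : Fin (2*d) → Bool) (i₀ j₀ : Fin (2*d)) (bi bj : Bool) :
    Fin (2*d) → Bool :=
  fun k => if k = i₀ then bi else if k = j₀ then bj else s k

lemma uFun_swap {d : ℕ} (s : Fin (2*d) → Bool) {i₀ j₀ : Fin (2*d)} (hij : i₀ ≠ j₀)
    (bi bj : Bool) : uFun d s j₀ i₀ bj bi = uFun d s i₀ j₀ bi bj := by
  funext k
  unfold uFun
  by_cases h1 : k = i₀ <;> by_cases h2 : k = j₀ <;> subst_vars <;>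
    simp_all [hij, hij.symm]

lemma uFun_ff {d : ℕ} (s : Fin (2*d) → Bool) {i₀ j₀ : Fin (2*d)}
    (hsi : s i₀ = false) (hsj : s j₀ = false) : uFun d s i₀ j₀ false false = s := by
  funext k
  unfold uFun
  by_cases h1 : k = i₀ <;> by_cases h2 : k = j₀ <;> simp_all

include hfacets hpiZ in
lemma pi_ratio (s : Fin (2*d) → Bool) (j₀ : Fin (2*d)) (hsj : s j₀ = false)
    (s' : Fin (2*d) → Bool) (hs' : ∀ k, k ≠ j₀ → s' k = s k) (hs'j : s' j₀ = true)
    (hInd : Indep d s') :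
    K.pi (Fct d s') = lam * K.pi (Fct d s) := by
  have hIs : Indep d s := by
    refine Indep_mono (fun k hk => ?_) hInd
    by_cases h : k = j₀
    · rw [h, hsj] at hk; exact absurd hk (by simp)
    · rw [hs' k h]; exact hk
  have hmem : Fct d s ∈ K.facets := (facets_iff K hfacets _).2 ⟨s, hIs, rfl⟩
  have hmem' : Fct d s' ∈ K.facets := (facets_iff K hfacets _).2 ⟨s', hInd, rfl⟩
  rw [hpiZ _ hmem, hpiZ _ hmem']
  have hfil : ∀ t : Fin (2*d) → Bool,
      (Fct d t).filter (fun p => p.2 = true) =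
        (Finset.univ.filter (fun k => t k = true)).image (fun k => (k, t k)) := by
    intro t
    ext p
    simp only [mem_filter, mem_Fct, mem_image, mem_univ, true_and]
    constructor
    · rintro ⟨h1, h2⟩
      exact ⟨p.1, h1 ▸ h2, by rw [← h1]⟩
    · rintro ⟨k, hk, rfl⟩
      exact ⟨rfl, hk⟩
  have hcard : ∀ t : Fin (2*d) → Bool,
      ((Fct d t).filter (fun p => p.2 = true)).card =
        (Finset.univ.filter (fun k => t k = true)).card := by
    intro t
    rw [hfil t, Finset.card_image_of_injective _
      (fun a b hab => (Prod.mk.injEq _ _ _ _ ▸ hab).1)]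
  rw [hcard, hcard]
  have hset : Finset.univ.filter (fun k => s' k = true) =
      insert j₀ (Finset.univ.filter (fun k => s k = true)) := by
    ext k
    simp only [mem_filter, mem_univ, true_and, mem_insert]
    by_cases h : k = j₀
    · subst h; simp [hs'j]
    · rw [hs' k h]; simp [h]
  rw [hset, Finset.card_insert_of_notMem (by simp [hsj]), pow_succ]
  ring

def theTau (d : ℕ) (s : Fin (2*d) → Bool) (i₀ j₀ : Fin (2*d)) :
    Finset (Fin (2*d) × Bool) :=
  (Finset.univ.filter (fun k => ¬k = i₀ ∧ ¬k = j₀)).image (fun k => (k, s k))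

lemma mem_theTau {d : ℕ} {s : Fin (2*d) → Bool} {i₀ j₀ : Fin (2*d)}
    {p : Fin (2*d) × Bool} :
    p ∈ theTau d s i₀ j₀ ↔ ¬p.1 = i₀ ∧ ¬p.1 = j₀ ∧ p.2 = s p.1 := by
  simp only [theTau, mem_image, mem_filter, mem_univ, true_and]
  constructor
  · rintro ⟨k, ⟨h1, h2⟩, rfl⟩
    exact ⟨h1, h2, rfl⟩
  · rintro ⟨h1, h2, h3⟩
    exact ⟨p.1, ⟨h1, h2⟩, by rw [← h3]⟩

lemma theTau_swap (d : ℕ) (s : Fin (2*d) → Bool) (i₀ j₀ : Fin (2*d)) :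
    theTau d s j₀ i₀ = theTau d s i₀ j₀ := by
  ext p
  rw [mem_theTau, mem_theTau]
  tauto

lemma uFun_i {d : ℕ} {s : Fin (2*d) → Bool} {i₀ j₀ : Fin (2*d)} (hij : i₀ ≠ j₀)
    (bi bj : Bool) : uFun d s i₀ j₀ bi bj i₀ = bi := by simp [uFun]

lemma uFun_j {d : ℕ} {s : Fin (2*d) → Bool} {i₀ j₀ : Fin (2*d)} (hij : i₀ ≠ j₀)
    (bi bj : Bool) : uFun d s i₀ j₀ bi bj j₀ = bj := by simp [uFun, hij.symm]

lemma uFun_other {d : ℕ} {s : Fin (2*d) → Bool} {i₀ j₀ k : Fin (2*d)}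
    (h1 : ¬k = i₀) (h2 : ¬k = j₀) (bi bj : Bool) :
    uFun d s i₀ j₀ bi bj k = s k := by simp [uFun, h1, h2]

include hfacets in
lemma key_facets (s : Fin (2*d) → Bool) (i₀ j₀ : Fin (2*d)) (hij : i₀ ≠ j₀)
    (η : Finset (Fin (2*d) × Bool)) :
    (η ∈ K.facets ∧ theTau d s i₀ j₀ ⊆ η) ↔
      ∃ bi bj, Indep d (uFun d s i₀ j₀ bi bj) ∧ η = Fct d (uFun d s i₀ j₀ bi bj) := by
  constructor
  · rintro ⟨hη, hsub⟩
    obtain ⟨s', hs', rfl⟩ := (facets_iff K hfacets _).1 hη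
    refine ⟨s' i₀, s' j₀, ?_, ?_⟩ <;>
    · have : uFun d s i₀ j₀ (s' i₀) (s' j₀) = s' := by
        funext k
        by_cases h1 : k = i₀
        · subst h1; exact uFun_i hij _ _
        by_cases h2 : k = j₀
        · subst h2; exact uFun_j hij _ _
        rw [uFun_other h1 h2]
        have hmem : (k, s k) ∈ theTau d s i₀ j₀ := mem_theTau.2 ⟨h1, h2, rfl⟩
        exact mem_Fct.1 (hsub hmem)
      rw [this]
      all_goals exact hs'
  · rintro ⟨bi, bj, hInd, rfl⟩
    refine ⟨(facets_iff K hfacets _).2 ⟨_, hInd, rfl⟩, fun p hp => ?_⟩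
    rw [mem_theTau] at hp
    rw [mem_Fct, uFun_other hp.1 hp.2.1]
    exact hp.2.2

include hfacets in
lemma filterN_eq (s : Fin (2*d) → Bool) (i₀ j₀ : Fin (2*d)) (hij : i₀ ≠ j₀)
    (bi bj : Bool) (hInd : Indep d (uFun d s i₀ j₀ bi bj)) :
    K.facets.filter (fun η => theTau d s i₀ j₀ ⊆ η ∧ (i₀, bi) ∈ η ∧ (j₀, bj) ∈ η) =
      {Fct d (uFun d s i₀ j₀ bi bj)} := by
  ext η
  simp only [mem_filter, mem_singleton]
  constructor
  · rintro ⟨h1, h2, h3, h4⟩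
    obtain ⟨bi', bj', hInd', rfl⟩ := (key_facets K hfacets s i₀ j₀ hij η).1 ⟨h1, h2⟩
    have e1 : bi = bi' := by have := mem_Fct.1 h3; rwa [uFun_i hij] at this
    have e2 : bj = bj' := by have := mem_Fct.1 h4; rwa [uFun_j hij] at this
    rw [e1, e2]
  · rintro rfl
    have := (key_facets K hfacets s i₀ j₀ hij _).2 ⟨bi, bj, hInd, rfl⟩
    exact ⟨this.1, this.2, mem_Fct.2 (uFun_i hij _ _).symm, mem_Fct.2 (uFun_j hij _ _).symm⟩

include hfacets in
lemma filterN_empty_notIndep (s : Fin (2*d) → Bool) (i₀ j₀ : Fin (2*d)) (hij : i₀ ≠ j₀)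
    (bi bj : Bool) (hInd : ¬Indep d (uFun d s i₀ j₀ bi bj)) :
    K.facets.filter (fun η => theTau d s i₀ j₀ ⊆ η ∧ (i₀, bi) ∈ η ∧ (j₀, bj) ∈ η) = ∅ := by
  ext η
  simp only [mem_filter, Finset.notMem_empty, iff_false]
  rintro ⟨h1, h2, h3, h4⟩
  obtain ⟨bi', bj', hInd', rfl⟩ := (key_facets K hfacets s i₀ j₀ hij η).1 ⟨h1, h2⟩
  have e1 : bi = bi' := by have := mem_Fct.1 h3; rwa [uFun_i hij] at this
  have e2 : bj = bj' := by have := mem_Fct.1 h4; rwa [uFun_j hij] at this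
  exact hInd (e1 ▸ e2 ▸ hInd')

include hfacets in
lemma filterN_empty_fst_eq (τ : Finset (Fin (2*d) × Bool)) (x y : Fin (2*d) × Bool)
    (hxy : x.1 = y.1) (hne : x ≠ y) :
    K.facets.filter (fun η => τ ⊆ η ∧ x ∈ η ∧ y ∈ η) = ∅ := by
  ext η
  simp only [mem_filter, Finset.notMem_empty, iff_false]
  rintro ⟨h1, _, h3, h4⟩
  obtain ⟨s', _, rfl⟩ := (facets_iff K hfacets _).1 h1
  have e1 := mem_Fct.1 h3
  have e2 := mem_Fct.1 h4
  exact hne (Prod.ext hxy (by rw [e1, e2, hxy]))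

include hfacets in
lemma filterN_empty_other (s : Fin (2*d) → Bool) (i₀ j₀ : Fin (2*d)) (hij : i₀ ≠ j₀)
    (x y : Fin (2*d) × Bool) (hx1 : ¬x.1 = i₀) (hx2 : ¬x.1 = j₀)
    (hx : x ∉ theTau d s i₀ j₀) :
    K.facets.filter (fun η => theTau d s i₀ j₀ ⊆ η ∧ x ∈ η ∧ y ∈ η) = ∅ := by
  ext η
  simp only [mem_filter, Finset.notMem_empty, iff_false]
  rintro ⟨h1, h2, h3, _⟩
  obtain ⟨bi', bj', _, rfl⟩ := (key_facets K hfacets s i₀ j₀ hij η).1 ⟨h1, h2⟩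
  have e1 := mem_Fct.1 h3
  rw [uFun_other hx1 hx2] at e1
  exact hx (mem_theTau.2 ⟨hx1, hx2, e1⟩)

include hfacets in
lemma faceWeight_pos (s : Fin (2*d) → Bool) (hs : Indep d s) (i₀ j₀ : Fin (2*d))
    (hij : i₀ ≠ j₀) (hsi : s i₀ = false) (hsj : s j₀ = false) :
    0 < K.toWeightedComplex.faceWeight (theTau d s i₀ j₀) := by
  unfold WeightedComplex.faceWeight
  have hmem : Fct d s ∈ K.facets.filter (fun η => theTau d s i₀ j₀ ⊆ η) := by
    rw [mem_filter]
    have := (key_facets K hfacets s i₀ j₀ hij (Fct d s)).2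
      ⟨false, false, by rw [uFun_ff s hsi hsj]; exact hs, by rw [uFun_ff s hsi hsj]⟩
    exact this
  exact Finset.sum_pos (fun η hη => K.pi_pos _ (mem_filter.1 hη).1) ⟨_, hmem⟩

lemma lw_symm (τ : Finset (Fin (2*d) × Bool)) (x y : Fin (2*d) × Bool) :
    K.toWeightedComplex.linkWeight τ x y = K.toWeightedComplex.linkWeight τ y x := by
  unfold WeightedComplex.linkWeight
  have hg : (x = y ∨ x ∈ τ ∨ y ∈ τ) ↔ (y = x ∨ y ∈ τ ∨ x ∈ τ) := by
    constructor <;> rintro (h | h | h) <;>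
      first
        | exact Or.inl h.symm
        | exact Or.inr (Or.inr h)
        | exact Or.inr (Or.inl h)
  have hf : K.facets.filter (fun η => τ ⊆ η ∧ x ∈ η ∧ y ∈ η) =
      K.facets.filter (fun η => τ ⊆ η ∧ y ∈ η ∧ x ∈ η) := by
    apply Finset.filter_congr
    intro η _
    constructor <;> rintro ⟨u1, u2, u3⟩ <;> exact ⟨u1, u3, u2⟩
  rw [hf]
  by_cases h : x = y ∨ x ∈ τ ∨ y ∈ τ
  · rw [if_pos h, if_pos (hg.1 h)]
  · rw [if_neg h, if_neg (fun h' => h (hg.2 h'))]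

include hfacets in
lemma lw_eq (s : Fin (2*d) → Bool) (i₀ j₀ : Fin (2*d)) (hij : i₀ ≠ j₀) (bi bj : Bool) :
    K.toWeightedComplex.linkWeight (theTau d s i₀ j₀) (i₀, bi) (j₀, bj) =
      (if Indep d (uFun d s i₀ j₀ bi bj) then K.pi (Fct d (uFun d s i₀ j₀ bi bj)) else 0) /
        K.toWeightedComplex.faceWeight (theTau d s i₀ j₀) := by
  unfold WeightedComplex.linkWeight
  rw [if_neg]
  · by_cases h : Indep d (uFun d s i₀ j₀ bi bj)
    · rw [if_pos h, filterN_eq K hfacets s i₀ j₀ hij bi bj h, Finset.sum_singleton]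
    · rw [if_neg h, filterN_empty_notIndep K hfacets s i₀ j₀ hij bi bj h,
        Finset.sum_empty]
  · rintro (h | h | h)
    · exact hij (congrArg Prod.fst h)
    · exact (mem_theTau.1 h).1 rfl
    · exact (mem_theTau.1 h).2.1 rfl

include hfacets in
lemma lw_zero_fst_ne (s : Fin (2*d) → Bool) (i₀ j₀ : Fin (2*d)) (hij : i₀ ≠ j₀)
    (x y : Fin (2*d) × Bool) (hx1 : ¬x.1 = i₀) (hx2 : ¬x.1 = j₀) :
    K.toWeightedComplex.linkWeight (theTau d s i₀ j₀) x y = 0 := by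
  unfold WeightedComplex.linkWeight
  by_cases h : x = y ∨ x ∈ theTau d s i₀ j₀ ∨ y ∈ theTau d s i₀ j₀
  · rw [if_pos h]
  · rw [if_neg h]
    push_neg at h
    rw [filterN_empty_other K hfacets s i₀ j₀ hij x y hx1 hx2 h.2.1,
      Finset.sum_empty, zero_div]

include hfacets in
lemma lw_zero_fst_eq (τ : Finset (Fin (2*d) × Bool)) (x y : Fin (2*d) × Bool)
    (hxy : x.1 = y.1) :
    K.toWeightedComplex.linkWeight τ x y = 0 := by
  unfold WeightedComplex.linkWeight
  by_cases h : x = y ∨ x ∈ τ ∨ y ∈ τ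
  · rw [if_pos h]
  · rw [if_neg h]
    push_neg at h
    rw [filterN_empty_fst_eq K hfacets τ x y hxy h.1, Finset.sum_empty, zero_div]

include hfacets in
lemma rowsum_eq (s : Fin (2*d) → Bool) (i₀ j₀ : Fin (2*d)) (hij : i₀ ≠ j₀) (bi : Bool) :
    ∑ z, K.toWeightedComplex.linkWeight (theTau d s i₀ j₀) (i₀, bi) z =
      K.toWeightedComplex.linkWeight (theTau d s i₀ j₀) (i₀, bi) (j₀, false) +
      K.toWeightedComplex.linkWeight (theTau d s i₀ j₀) (i₀, bi) (j₀, true) := by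
  rw [← Finset.sum_pair (by simp : ((j₀, false) : Fin (2*d) × Bool) ≠ (j₀, true))]
  apply (Finset.sum_subset (Finset.subset_univ _) _).symm
  intro z _ hz
  by_cases h1 : z.1 = j₀
  · exfalso
    apply hz
    simp only [Finset.mem_insert, Finset.mem_singleton]
    rcases Bool.dichotomy z.2 with h2 | h2
    · left; rw [← h1, ← h2]
    · right; rw [← h1, ← h2]
  by_cases h2 : z.1 = i₀
  · exact lw_zero_fst_eq K hfacets _ _ _ (by rw [h2])
  · rw [lw_symm]
    exact lw_zero_fst_ne K hfacets s i₀ j₀ hij z _ h2 h1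

include hfacets in
lemma walk_row_zero (s : Fin (2*d) → Bool) (i₀ j₀ : Fin (2*d)) (hij : i₀ ≠ j₀)
    (x : Fin (2*d) × Bool) (hx1 : ¬x.1 = i₀) (hx2 : ¬x.1 = j₀) (z : Fin (2*d) × Bool) :
    K.toWeightedComplex.walkMatrix (theTau d s i₀ j₀) x z = 0 := by
  unfold WeightedComplex.walkMatrix
  simp only [Matrix.of_apply]
  rw [lw_zero_fst_ne K hfacets s i₀ j₀ hij x z hx1 hx2, zero_div]

include hfacets in
lemma walk_entry (s : Fin (2*d) → Bool) (i₀ j₀ : Fin (2*d)) (hij : i₀ ≠ j₀)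
    (bi bj : Bool) :
    K.toWeightedComplex.walkMatrix (theTau d s i₀ j₀) (i₀, bi) (j₀, bj) =
      K.toWeightedComplex.linkWeight (theTau d s i₀ j₀) (i₀, bi) (j₀, bj) /
        (K.toWeightedComplex.linkWeight (theTau d s i₀ j₀) (i₀, bi) (j₀, false) +
         K.toWeightedComplex.linkWeight (theTau d s i₀ j₀) (i₀, bi) (j₀, true)) := by
  unfold WeightedComplex.walkMatrix
  simp only [Matrix.of_apply]
  rw [rowsum_eq K hfacets s i₀ j₀ hij bi]

lemma mulVec_pair {α : Type*} [Fintype α] [DecidableEq α] (M : Matrix α α ℝ)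
    (v : α → ℝ) (x z1 z2 : α) (hz : z1 ≠ z2)
    (h0 : ∀ z, z ≠ z1 → z ≠ z2 → M x z = 0) :
    M.mulVec v x = M x z1 * v z1 + M x z2 * v z2 := by
  simp only [Matrix.mulVec, dotProduct]
  have hp : ∑ z ∈ ({z1, z2} : Finset α), M x z * v z = M x z1 * v z1 + M x z2 * v z2 :=
    Finset.sum_pair hz
  rw [← hp]
  apply (Finset.sum_subset (Finset.subset_univ _) _).symm
  intro z _ hz'
  simp only [Finset.mem_insert, Finset.mem_singleton] at hz'
  push_neg at hz'
  rw [h0 z hz'.1 hz'.2, zero_mul]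

lemma mulVec_zero_row {α : Type*} [Fintype α] [DecidableEq α] (M : Matrix α α ℝ)
    (v : α → ℝ) (x : α) (h0 : ∀ z, M x z = 0) : M.mulVec v x = 0 := by
  simp only [Matrix.mulVec, dotProduct]
  exact Finset.sum_eq_zero (fun z _ => by rw [h0 z, zero_mul])


include hfacets in
lemma walk_entry_i (s : Fin (2*d) → Bool) (hs : Indep d s) (i₀ j₀ : Fin (2*d))
    (hij : i₀ ≠ j₀) (hsi : s i₀ = false) (hsj : s j₀ = false) (bi bj : Bool) :
    K.toWeightedComplex.walkMatrix (theTau d s i₀ j₀) (i₀, bi) (j₀, bj) =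
      (if Indep d (uFun d s i₀ j₀ bi bj) then K.pi (Fct d (uFun d s i₀ j₀ bi bj)) else 0) /
      ((if Indep d (uFun d s i₀ j₀ bi false) then K.pi (Fct d (uFun d s i₀ j₀ bi false)) else 0)
        + (if Indep d (uFun d s i₀ j₀ bi true) then K.pi (Fct d (uFun d s i₀ j₀ bi true)) else 0)) := by
  have hW := faceWeight_pos K hfacets s hs i₀ j₀ hij hsi hsj
  rw [walk_entry K hfacets s i₀ j₀ hij bi bj,
    lw_eq K hfacets s i₀ j₀ hij bi bj,
    lw_eq K hfacets s i₀ j₀ hij bi false,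
    lw_eq K hfacets s i₀ j₀ hij bi true, ← add_div]
  exact div_div_div_same hW.ne'

include hfacets in
lemma walk_entry_j (s : Fin (2*d) → Bool) (hs : Indep d s) (i₀ j₀ : Fin (2*d))
    (hij : i₀ ≠ j₀) (hsi : s i₀ = false) (hsj : s j₀ = false) (bi bj : Bool) :
    K.toWeightedComplex.walkMatrix (theTau d s i₀ j₀) (j₀, bj) (i₀, bi) =
      (if Indep d (uFun d s i₀ j₀ bi bj) then K.pi (Fct d (uFun d s i₀ j₀ bi bj)) else 0) /
      ((if Indep d (uFun d s i₀ j₀ false bj) then K.pi (Fct d (uFun d s i₀ j₀ false bj)) else 0)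
        + (if Indep d (uFun d s i₀ j₀ true bj) then K.pi (Fct d (uFun d s i₀ j₀ true bj)) else 0)) := by
  have hW := faceWeight_pos K hfacets s hs i₀ j₀ hij hsi hsj
  have h1 := walk_entry K hfacets s j₀ i₀ hij.symm bj bi
  have h2 := lw_eq K hfacets s j₀ i₀ hij.symm bj bi
  have h3 := lw_eq K hfacets s j₀ i₀ hij.symm bj false
  have h4 := lw_eq K hfacets s j₀ i₀ hij.symm bj true
  rw [theTau_swap] at h1 h2 h3 h4
  rw [uFun_swap s hij] at h2 h3 h4
  rw [h1, h2, h3, h4, ← add_div]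
  exact div_div_div_same hW.ne'

include hfacets in
lemma mulVec_row_i (s : Fin (2*d) → Bool) (i₀ j₀ : Fin (2*d)) (hij : i₀ ≠ j₀)
    (v : Fin (2*d) × Bool → ℝ) (bi : Bool) :
    (K.toWeightedComplex.walkMatrix (theTau d s i₀ j₀)).mulVec v (i₀, bi) =
      K.toWeightedComplex.walkMatrix (theTau d s i₀ j₀) (i₀, bi) (j₀, false) * v (j₀, false) +
      K.toWeightedComplex.walkMatrix (theTau d s i₀ j₀) (i₀, bi) (j₀, true) * v (j₀, true) := by
  rw [mulVec_pair _ _ _ (j₀, false) (j₀, true) (by simp) ?_]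
  intro z hz1 hz2
  by_cases hzj : z.1 = j₀
  · exfalso
    rcases Bool.dichotomy z.2 with h2 | h2
    · exact hz1 (Prod.ext hzj h2)
    · exact hz2 (Prod.ext hzj h2)
  by_cases hzi : z.1 = i₀
  · unfold WeightedComplex.walkMatrix
    simp only [Matrix.of_apply]
    rw [lw_zero_fst_eq K hfacets _ _ _ (by rw [hzi]), zero_div]
  · unfold WeightedComplex.walkMatrix
    simp only [Matrix.of_apply]
    rw [lw_symm, lw_zero_fst_ne K hfacets s i₀ j₀ hij z _ hzi hzj, zero_div]

include hfacets in
lemma mulVec_row_j (s : Fin (2*d) → Bool) (i₀ j₀ : Fin (2*d)) (hij : i₀ ≠ j₀)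
    (v : Fin (2*d) × Bool → ℝ) (bj : Bool) :
    (K.toWeightedComplex.walkMatrix (theTau d s i₀ j₀)).mulVec v (j₀, bj) =
      K.toWeightedComplex.walkMatrix (theTau d s i₀ j₀) (j₀, bj) (i₀, false) * v (i₀, false) +
      K.toWeightedComplex.walkMatrix (theTau d s i₀ j₀) (j₀, bj) (i₀, true) * v (i₀, true) := by
  rw [mulVec_pair _ _ _ (i₀, false) (i₀, true) (by simp) ?_]
  intro z hz1 hz2
  by_cases hzi : z.1 = i₀
  · exfalso
    rcases Bool.dichotomy z.2 with h2 | h2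
    · exact hz1 (Prod.ext hzi h2)
    · exact hz2 (Prod.ext hzi h2)
  by_cases hzj : z.1 = j₀
  · unfold WeightedComplex.walkMatrix
    simp only [Matrix.of_apply]
    rw [lw_zero_fst_eq K hfacets _ _ _ (by rw [hzj]), zero_div]
  · unfold WeightedComplex.walkMatrix
    simp only [Matrix.of_apply]
    rw [lw_symm, lw_zero_fst_ne K hfacets s i₀ j₀ hij z _ hzi hzj, zero_div]

include hlam hfacets hZ hpiZ in
lemma spectral_bound (s : Fin (2*d) → Bool) (hs : Indep d s) (i₀ j₀ : Fin (2*d))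
    (hij : i₀ ≠ j₀) (hsi : s i₀ = false) (hsj : s j₀ = false)
    (μ : ℝ) (hμ1 : μ < 1)
    (hspec : μ ∈ spectrum ℝ (K.toWeightedComplex.walkMatrix (theTau d s i₀ j₀))) :
    μ ≤ lam / (1 + lam) := by
  by_contra hcon
  push_neg at hcon
  have hμ0 : 0 < μ := mu_pos hlam hcon
  obtain ⟨v, hv, heig⟩ := (spec_iff _ _).1 hspec
  have heig' : ∀ x, μ * v x = (K.toWeightedComplex.walkMatrix (theTau d s i₀ j₀)).mulVec v x := by
    intro x
    rw [heig]
    simp [Pi.smul_apply, smul_eq_mul]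
  -- vanishing outside the two missing parts
  have hv_out : ∀ x : Fin (2*d) × Bool, ¬x.1 = i₀ → ¬x.1 = j₀ → v x = 0 := by
    intro x h1 h2
    have := heig' x
    rw [mulVec_zero_row _ _ _ (walk_row_zero K hfacets s i₀ j₀ hij x h1 h2)] at this
    rcases mul_eq_zero.1 this with h | h
    · exact absurd h hμ0.ne'
    · exact h
  -- the A-values
  set W := K.toWeightedComplex.faceWeight (theTau d s i₀ j₀) with hWdef
  have hW : 0 < W := faceWeight_pos K hfacets s hs i₀ j₀ hij hsi hsj
  set A : Bool → Bool → ℝ := fun bi bj =>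
    if Indep d (uFun d s i₀ j₀ bi bj) then K.pi (Fct d (uFun d s i₀ j₀ bi bj)) else 0
    with hAdef
  have hAnn : ∀ bi bj, 0 ≤ A bi bj := by
    intro bi bj
    rw [hAdef]
    dsimp only
    split
    · exact le_of_lt (K.pi_pos _ ((facets_iff K hfacets _).2 ⟨_, ‹_›, rfl⟩))
    · exact le_refl 0
  -- entries of the walk matrix
  have hent_i : ∀ bi bj, K.toWeightedComplex.walkMatrix (theTau d s i₀ j₀) (i₀, bi) (j₀, bj)
      = A bi bj / (A bi false + A bi true) := by
    intro bi bj
    simp only [hAdef]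
    exact walk_entry_i K hfacets s hs i₀ j₀ hij hsi hsj bi bj
  have hent_j : ∀ bi bj, K.toWeightedComplex.walkMatrix (theTau d s i₀ j₀) (j₀, bj) (i₀, bi)
      = A bi bj / (A false bj + A true bj) := by
    intro bi bj
    simp only [hAdef]
    exact walk_entry_j K hfacets s hs i₀ j₀ hij hsi hsj bi bj
  -- row equations
  have hrow_i : ∀ bi : Bool, μ * v (i₀, bi) =
      A bi false / (A bi false + A bi true) * v (j₀, false) +
      A bi true / (A bi false + A bi true) * v (j₀, true) := by
    intro bi
    rw [heig' (i₀, bi), mulVec_row_i K hfacets s i₀ j₀ hij v bi,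
      hent_i bi false, hent_i bi true]
  have hrow_j : ∀ bj : Bool, μ * v (j₀, bj) =
      A false bj / (A false bj + A true bj) * v (i₀, false) +
      A true bj / (A false bj + A true bj) * v (i₀, true) := by
    intro bj
    rw [heig' (j₀, bj), mulVec_row_j K hfacets s i₀ j₀ hij v bj,
      hent_j false bj, hent_j true bj]
  -- abbreviations
  set a0 := v (i₀, false) with ha0def
  set a1 := v (i₀, true) with ha1def
  set b0 := v (j₀, false) with hb0def
  set b1 := v (j₀, true) with hb1def
  have hne : ¬(a0 = 0 ∧ a1 = 0 ∧ b0 = 0 ∧ b1 = 0) := by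
    rintro ⟨x1, x2, x3, x4⟩
    apply hv
    funext x
    by_cases h1 : x.1 = i₀
    · have hx : x = (i₀, x.2) := Prod.ext h1 rfl
      rcases Bool.dichotomy x.2 with h2 | h2 <;> rw [hx, h2]
      · exact x1
      · exact x2
    by_cases h2 : x.1 = j₀
    · have hx : x = (j₀, x.2) := Prod.ext h2 rfl
      rcases Bool.dichotomy x.2 with h3 | h3 <;> rw [hx, h3]
      · exact x3
      · exact x4
    · exact hv_out x h1 h2
  -- compute the A values
  have hπ0 : 0 < K.pi (Fct d s) :=
    K.pi_pos _ ((facets_iff K hfacets _).2 ⟨s, hs, rfl⟩)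
  set π0 := K.pi (Fct d s) with hπ0def
  have hA00 : A false false = π0 := by
    rw [hAdef]
    dsimp only
    rw [uFun_ff s hsi hsj, if_pos hs]
  have hA01q : Indep d (uFun d s i₀ j₀ false true) → A false true = lam * π0 := by
    intro hq
    rw [hAdef]
    dsimp only
    rw [if_pos hq]
    refine pi_ratio K hfacets hpiZ s j₀ hsj _ (fun k hk => ?_) (uFun_j hij _ _) hq
    by_cases h1 : k = i₀
    · subst h1; rw [uFun_i hij, hsi]
    · rw [uFun_other h1 hk]
  have hA10p : Indep d (uFun d s i₀ j₀ true false) → A true false = lam * π0 := by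
    intro hp
    rw [hAdef]
    dsimp only
    rw [if_pos hp]
    refine pi_ratio K hfacets hpiZ s i₀ hsi _ (fun k hk => ?_) (uFun_i hij _ _) hp
    by_cases h2 : k = j₀
    · subst h2; rw [uFun_j hij, hsj]
    · rw [uFun_other hk h2]
  have hrp : Indep d (uFun d s i₀ j₀ true true) → Indep d (uFun d s i₀ j₀ true false) := by
    intro hr
    refine Indep_mono (fun k hk => ?_) hr
    by_cases h1 : k = i₀
    · subst h1; rw [uFun_i hij]
    · by_cases h2 : k = j₀
      · subst h2; rw [uFun_j hij] at hk; exact absurd hk (by simp)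
      · rwa [uFun_other h1 h2] at hk ⊢
  have hrq : Indep d (uFun d s i₀ j₀ true true) → Indep d (uFun d s i₀ j₀ false true) := by
    intro hr
    refine Indep_mono (fun k hk => ?_) hr
    by_cases h1 : k = i₀
    · subst h1; rw [uFun_i hij] at hk; exact absurd hk (by simp)
    · by_cases h2 : k = j₀
      · subst h2; rw [uFun_j hij]
      · rwa [uFun_other h1 h2] at hk ⊢
  have hA11r : Indep d (uFun d s i₀ j₀ true true) → A true true = lam * (lam * π0) := by
    intro hr
    rw [hAdef]
    dsimp only
    rw [if_pos hr, ← hA10p (hrp hr)]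
    rw [hAdef]
    dsimp only
    rw [if_pos (hrp hr)]
    refine pi_ratio K hfacets hpiZ (uFun d s i₀ j₀ true false) j₀ (uFun_j hij _ _) _
      (fun k hk => ?_) (uFun_j hij _ _) hr
    by_cases h1 : k = i₀
    · subst h1; rw [uFun_i hij, uFun_i hij]
    · rw [uFun_other h1 hk, uFun_other h1 hk]
  have hA10n : ¬Indep d (uFun d s i₀ j₀ true false) → A true false = 0 := by
    intro hp; rw [hAdef]; dsimp only; rw [if_neg hp]
  have hA01n : ¬Indep d (uFun d s i₀ j₀ false true) → A false true = 0 := by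
    intro hq; rw [hAdef]; dsimp only; rw [if_neg hq]
  have hA11n : ¬Indep d (uFun d s i₀ j₀ true true) → A true true = 0 := by
    intro hr; rw [hAdef]; dsimp only; rw [if_neg hr]
  have hπ0' := hπ0.ne'
  have h1l : (0:ℝ) < 1 + lam := by linarith
  by_cases hp : Indep d (uFun d s i₀ j₀ true false)
  · by_cases hq : Indep d (uFun d s i₀ j₀ false true)
    · by_cases hr : Indep d (uFun d s i₀ j₀ true true)
      · -- case TTT
        have e1 : μ * a0 * (1 + lam) = b0 + lam * b1 := by
          have h := hrow_i false
          rw [hA00, hA01q hq] at h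
          apply mul_left_cancel₀ hπ0'
          rw [h]
          field_simp
          all_goals ring
        have e2 : μ * a1 * (1 + lam) = b0 + lam * b1 := by
          have h := hrow_i true
          rw [hA10p hp, hA11r hr] at h
          apply mul_left_cancel₀ (by positivity : lam * π0 ≠ 0)
          rw [h]
          field_simp
          all_goals ring
        have e3 : μ * b0 * (1 + lam) = a0 + lam * a1 := by
          have h := hrow_j false
          rw [hA00, hA10p hp] at h
          apply mul_left_cancel₀ hπ0'
          rw [h]
          field_simp
          all_goals ring
        have e4 : μ * b1 * (1 + lam) = a0 + lam * a1 := by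
          have h := hrow_j true
          rw [hA01q hq, hA11r hr] at h
          apply mul_left_cancel₀ (by positivity : lam * π0 ≠ 0)
          rw [h]
          field_simp
          all_goals ring
        exact alg_ppr hlam hμ1 hcon hne e1 e2 e3 e4
      · -- case TTF
        have e1 : μ * a0 * (1 + lam) = b0 + lam * b1 := by
          have h := hrow_i false
          rw [hA00, hA01q hq] at h
          apply mul_left_cancel₀ hπ0'
          rw [h]
          field_simp
          all_goals ring
        have e2 : μ * a1 = b0 := by
          have h := hrow_i true
          rw [hA10p hp, hA11n hr] at h
          apply mul_left_cancel₀ (by positivity : lam * π0 ≠ 0)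
          rw [h]
          field_simp
          all_goals ring
        have e3 : μ * b0 * (1 + lam) = a0 + lam * a1 := by
          have h := hrow_j false
          rw [hA00, hA10p hp] at h
          apply mul_left_cancel₀ hπ0'
          rw [h]
          field_simp
          all_goals ring
        have e4 : μ * b1 = a0 := by
          have h := hrow_j true
          rw [hA01q hq, hA11n hr] at h
          apply mul_left_cancel₀ (by positivity : lam * π0 ≠ 0)
          rw [h]
          field_simp
          all_goals ring
        exact alg_pp hlam hμ1 hcon hne e1 e2 e3 e4
    · -- case T F: ¬q, hence ¬r
      have hr : ¬Indep d (uFun d s i₀ j₀ true true) := fun h => hq (hrq h)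
      have hb1 : b1 = 0 := by
        have h := hrow_j true
        rw [hA01n hq, hA11n hr] at h
        simp only [zero_div, zero_mul, add_zero, zero_add] at h
        rcases mul_eq_zero.1 h with h' | h'
        · exact absurd h' hμ0.ne'
        · exact h'
      have e1 : μ * a0 = b0 := by
        have h := hrow_i false
        rw [hA00, hA01n hq] at h
        apply mul_left_cancel₀ hπ0'
        rw [h]
        field_simp
        ring
      have e2 : μ * a1 = b0 := by
        have h := hrow_i true
        rw [hA10p hp, hA11n hr] at h
        apply mul_left_cancel₀ (by positivity : lam * π0 ≠ 0)
        rw [h]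
        field_simp
        all_goals ring
      have e3 : μ * b0 * (1 + lam) = a0 + lam * a1 := by
        have h := hrow_j false
        rw [hA00, hA10p hp] at h
        apply mul_left_cancel₀ hπ0'
        rw [h]
        field_simp
        all_goals ring
      exact alg_pn hlam hμ1 hcon hne e1 e2 e3 hb1
  · by_cases hq : Indep d (uFun d s i₀ j₀ false true)
    · -- case F T: ¬p, hence ¬r
      have hr : ¬Indep d (uFun d s i₀ j₀ true true) := fun h => hp (hrp h)
      have ha1 : a1 = 0 := by
        have h := hrow_i true
        rw [hA10n hp, hA11n hr] at h
        simp only [zero_div, zero_mul, add_zero, zero_add] at h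
        rcases mul_eq_zero.1 h with h' | h'
        · exact absurd h' hμ0.ne'
        · exact h'
      have e1 : μ * b0 = a0 := by
        have h := hrow_j false
        rw [hA00, hA10n hp] at h
        apply mul_left_cancel₀ hπ0'
        rw [h]
        field_simp
        ring
      have e2 : μ * b1 = a0 := by
        have h := hrow_j true
        rw [hA01q hq, hA11n hr] at h
        apply mul_left_cancel₀ (by positivity : lam * π0 ≠ 0)
        rw [h]
        field_simp
        all_goals ring
      have e3 : μ * a0 * (1 + lam) = b0 + lam * b1 := by
        have h := hrow_i false
        rw [hA00, hA01q hq] at h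
        apply mul_left_cancel₀ hπ0'
        rw [h]
        field_simp
        all_goals ring
      exact alg_pn hlam hμ1 hcon
        (fun ⟨x1, x2, x3, x4⟩ => hne ⟨x3, x4, x1, x2⟩) e1 e2 e3 ha1
    · -- case F F
      have hr : ¬Indep d (uFun d s i₀ j₀ true true) := fun h => hp (hrp h)
      have ha1 : a1 = 0 := by
        have h := hrow_i true
        rw [hA10n hp, hA11n hr] at h
        simp only [zero_div, zero_mul, add_zero, zero_add] at h
        rcases mul_eq_zero.1 h with h' | h'
        · exact absurd h' hμ0.ne'
        · exact h'
      have hb1 : b1 = 0 := by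
        have h := hrow_j true
        rw [hA01n hq, hA11n hr] at h
        simp only [zero_div, zero_mul, add_zero, zero_add] at h
        rcases mul_eq_zero.1 h with h' | h'
        · exact absurd h' hμ0.ne'
        · exact h'
      have e1 : μ * a0 = b0 := by
        have h := hrow_i false
        rw [hA00, hA01n hq] at h
        apply mul_left_cancel₀ hπ0'
        rw [h]
        field_simp
        ring
      have e2 : μ * b0 = a0 := by
        have h := hrow_j false
        rw [hA00, hA10n hp] at h
        apply mul_left_cancel₀ hπ0'
        rw [h]
        field_simp
        ring
      exact alg_nn hlam hμ1 hcon hne e1 e2 ha1 hb1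
include hfacets he in
lemma face_structure (hd : 2 ≤ d) (τ : Finset (Fin (2*d) × Bool))
    (hface : K.toWeightedComplex.IsFace τ) (hcard : τ.card = e - 1) :
    ∃ (s : Fin (2*d) → Bool) (i₀ j₀ : Fin (2*d)), Indep d s ∧ i₀ ≠ j₀ ∧
      s i₀ = false ∧ s j₀ = false ∧ τ = theTau d s i₀ j₀ := by
  obtain ⟨η, hη, hsub⟩ := hface
  obtain ⟨s₀, hs₀, rfl⟩ := (facets_iff K hfacets η).1 hη
  set B := Finset.univ.filter (fun k => (k, s₀ k) ∈ τ) with hBdef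
  have hτB : τ = B.image (fun k => (k, s₀ k)) := by
    ext p
    simp only [hBdef, mem_image, mem_filter, mem_univ, true_and]
    constructor
    · intro hp
      have := mem_Fct.1 (hsub hp)
      have hpe : p = (p.1, s₀ p.1) := Prod.ext rfl this
      exact ⟨p.1, by rwa [← hpe], hpe.symm⟩
    · rintro ⟨k, hk, rfl⟩
      exact hk
  have hBcard : B.card = 2*d - 2 := by
    have h1 : τ.card = B.card := by
      rw [hτB, Finset.card_image_of_injective _
        (fun a b hab => (Prod.mk.injEq _ _ _ _ ▸ hab).1)]
    rw [← h1, hcard]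
    omega
  have hBc : Bᶜ.card = 2 := by
    rw [Finset.card_compl, hBcard]
    simp only [Fintype.card_fin]
    omega
  obtain ⟨i₀, j₀, hij, hBceq⟩ := Finset.card_eq_two.1 hBc
  have hmemB : ∀ k, k ∈ B ↔ (¬k = i₀ ∧ ¬k = j₀) := by
    intro k
    rw [← not_iff_not]
    push_neg
    rw [← Finset.mem_compl, hBceq]
    simp only [Finset.mem_insert, Finset.mem_singleton]
    tauto
  refine ⟨fun k => if k = i₀ ∨ k = j₀ then false else s₀ k, i₀, j₀, ?_, hij, ?_, ?_, ?_⟩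
  · refine Indep_mono (fun k hk => ?_) hs₀
    by_cases h : k = i₀ ∨ k = j₀
    · rw [if_pos h] at hk; exact absurd hk (by simp)
    · rwa [if_neg h] at hk
  · simp
  · simp
  · rw [hτB]
    unfold theTau
    have hBfil : Finset.univ.filter (fun k : Fin (2*d) => ¬k = i₀ ∧ ¬k = j₀) = B := by
      ext k
      rw [mem_filter, hmemB k]
      simp
    rw [hBfil]
    apply Finset.image_congr
    intro k hk
    have := (hmemB k).1 hk
    simp only [this.1, this.2, or_self, if_neg]
    rw [if_neg (by tauto)]

include hlam hfacets hZ hpiZ in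
lemma spec_member (hd : 2 ≤ d) (h2d : 0 < 2*d) (h2d' : 2*d - 1 < 2*d) :
    lam / (1 + lam) ∈ spectrum ℝ (K.toWeightedComplex.walkMatrix
      (theTau d (fun _ => false) ⟨0, h2d⟩ ⟨2*d - 1, h2d'⟩)) := by
  set s : Fin (2*d) → Bool := fun _ => false with hsdef
  set i₀ : Fin (2*d) := ⟨0, h2d⟩ with hi₀
  set j₀ : Fin (2*d) := ⟨2*d - 1, h2d'⟩ with hj₀
  have hij : i₀ ≠ j₀ := by
    simp only [hi₀, hj₀, ne_eq, Fin.mk.injEq]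
    omega
  have hs : Indep d s := fun i j hi _ => by simp [hsdef] at hi
  have hsi : s i₀ = false := rfl
  have hsj : s j₀ = false := rfl
  have huval : ∀ (bi bj : Bool) (k : Fin (2*d)), uFun d s i₀ j₀ bi bj k = true →
      (bi = true ∧ k = i₀) ∨ (bj = true ∧ k = j₀) := by
    intro bi bj k hk
    unfold uFun at hk
    by_cases h1 : k = i₀
    · rw [if_pos h1] at hk; exact Or.inl ⟨hk, h1⟩
    by_cases h2 : k = j₀
    · rw [if_neg h1, if_pos h2] at hk; exact Or.inr ⟨hk, h2⟩
    · rw [if_neg h1, if_neg h2] at hk; simp [hsdef] at hk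
  have hp : Indep d (uFun d s i₀ j₀ true false) := by
    intro i j hi hj
    rcases huval _ _ _ hi with ⟨_, rfl⟩ | ⟨h, _⟩
    · rcases huval _ _ _ hj with ⟨_, rfl⟩ | ⟨h, _⟩
      · left
        constructor <;> · simp only [hi₀]; omega
      · exact absurd h (by simp)
    · exact absurd h (by simp)
  have hq : Indep d (uFun d s i₀ j₀ false true) := by
    intro i j hi hj
    rcases huval _ _ _ hi with ⟨h, _⟩ | ⟨_, rfl⟩
    · exact absurd h (by simp)
    · rcases huval _ _ _ hj with ⟨h, _⟩ | ⟨_, rfl⟩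
      · exact absurd h (by simp)
      · right
        constructor <;> · simp only [hj₀]; omega
  have hr : ¬Indep d (uFun d s i₀ j₀ true true) := by
    intro hInd
    have := hInd i₀ j₀ (by rw [uFun_i hij]) (by rw [uFun_j hij])
    simp only [hi₀, hj₀] at this
    omega
  -- pi values
  have hπ0 : 0 < K.pi (Fct d s) :=
    K.pi_pos _ ((facets_iff K hfacets _).2 ⟨s, hs, rfl⟩)
  set π0 := K.pi (Fct d s) with hπ0def
  have hA01 : K.pi (Fct d (uFun d s i₀ j₀ false true)) = lam * π0 := by
    refine pi_ratio K hfacets hpiZ s j₀ hsj _ (fun k hk => ?_) (uFun_j hij _ _) hq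
    by_cases h1 : k = i₀
    · subst h1; rw [uFun_i hij, hsi]
    · rw [uFun_other h1 hk]
  have hA10 : K.pi (Fct d (uFun d s i₀ j₀ true false)) = lam * π0 := by
    refine pi_ratio K hfacets hpiZ s i₀ hsi _ (fun k hk => ?_) (uFun_i hij _ _) hp
    by_cases h2 : k = j₀
    · subst h2; rw [uFun_j hij, hsj]
    · rw [uFun_other hk h2]
  have huff : uFun d s i₀ j₀ false false = s := uFun_ff s hsi hsj
  -- the entries
  have hent_i := walk_entry_i K hfacets s hs i₀ j₀ hij hsi hsj
  have hent_j := walk_entry_j K hfacets s hs i₀ j₀ hij hsi hsj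
  have hP1 : K.toWeightedComplex.walkMatrix (theTau d s i₀ j₀) (i₀, false) (j₀, false) =
      π0 / (π0 + lam * π0) := by
    rw [hent_i false false, huff, if_pos hs, if_pos hq, hA01]
  have hP2 : K.toWeightedComplex.walkMatrix (theTau d s i₀ j₀) (i₀, false) (j₀, true) =
      lam * π0 / (π0 + lam * π0) := by
    rw [hent_i false true, huff, if_pos hs, if_pos hq, hA01]
  have hP3 : K.toWeightedComplex.walkMatrix (theTau d s i₀ j₀) (i₀, true) (j₀, false) =
      lam * π0 / (lam * π0 + 0) := by
    rw [hent_i true false, if_pos hp, if_neg hr, hA10]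
  have hP4 : K.toWeightedComplex.walkMatrix (theTau d s i₀ j₀) (i₀, true) (j₀, true) = 0 := by
    rw [hent_i true true, if_neg hr, zero_div]
  have hP5 : K.toWeightedComplex.walkMatrix (theTau d s i₀ j₀) (j₀, false) (i₀, false) =
      π0 / (π0 + lam * π0) := by
    rw [hent_j false false, huff, if_pos hs, if_pos hp, hA10]
  have hP6 : K.toWeightedComplex.walkMatrix (theTau d s i₀ j₀) (j₀, false) (i₀, true) =
      lam * π0 / (π0 + lam * π0) := by
    rw [hent_j true false, huff, if_pos hs, if_pos hp, hA10]
  have hP7 : K.toWeightedComplex.walkMatrix (theTau d s i₀ j₀) (j₀, true) (i₀, false) =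
      lam * π0 / (lam * π0 + 0) := by
    rw [hent_j false true, if_pos hq, if_neg hr, hA01]
  have hP8 : K.toWeightedComplex.walkMatrix (theTau d s i₀ j₀) (j₀, true) (i₀, true) = 0 := by
    rw [hent_j true true, if_neg hr, zero_div]
  -- the eigenvector
  set v : Fin (2*d) × Bool → ℝ := fun x =>
    if x = (i₀, false) then lam else if x = (i₀, true) then -(1+lam)
    else if x = (j₀, false) then -lam else if x = (j₀, true) then 1+lam else 0 with hvdef
  have hv1 : v (i₀, false) = lam := by simp [hvdef]
  have hv2 : v (i₀, true) = -(1+lam) := by simp [hvdef]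
  have hv3 : v (j₀, false) = -lam := by
    simp [hvdef, Prod.ext_iff, hij.symm]
  have hv4 : v (j₀, true) = 1+lam := by
    simp [hvdef, Prod.ext_iff, hij.symm]
  have hv0 : ∀ x : Fin (2*d) × Bool, ¬x.1 = i₀ → ¬x.1 = j₀ → v x = 0 := by
    intro x h1 h2
    simp [hvdef, Prod.ext_iff, h1, h2]
  have hπ0' : π0 + lam * π0 ≠ 0 := by positivity
  have hlamπ0 : lam * π0 + 0 ≠ 0 := by positivity
  have h1lam : (1:ℝ) + lam ≠ 0 := by positivity
  rw [spec_iff]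
  refine ⟨v, fun h => ?_, ?_⟩
  · have : v (i₀, false) = 0 := by rw [h]; rfl
    rw [hv1] at this
    exact hlam.ne' this
  · funext x
    have hsmul : ((lam / (1 + lam)) • v) x = lam / (1 + lam) * v x := rfl
    rw [hsmul]
    by_cases h1 : x.1 = i₀
    · have hx : x = (i₀, x.2) := Prod.ext h1 rfl
      rcases Bool.dichotomy x.2 with h2 | h2 <;> rw [hx, h2]
      · rw [mulVec_row_i K hfacets s i₀ j₀ hij v false, hP1, hP2, hv1, hv3, hv4]
        field_simp
        all_goals ring
      · rw [mulVec_row_i K hfacets s i₀ j₀ hij v true, hP3, hP4, hv2, hv3, hv4]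
        field_simp
        all_goals ring
    by_cases h2 : x.1 = j₀
    · have hx : x = (j₀, x.2) := Prod.ext h2 rfl
      rcases Bool.dichotomy x.2 with h3 | h3 <;> rw [hx, h3]
      · rw [mulVec_row_j K hfacets s i₀ j₀ hij v false, hP5, hP6, hv1, hv2, hv3]
        field_simp
        all_goals ring
      · rw [mulVec_row_j K hfacets s i₀ j₀ hij v true, hP7, hP8, hv1, hv2, hv4]
        field_simp
        all_goals ring
    · rw [mulVec_zero_row _ _ _ (walk_row_zero K hfacets s i₀ j₀ hij x h1 h2), hv0 x h1 h2,
        mul_zero]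

end Main


open WeightedComplex PartiteWeightedComplex in
/-- The hard-core example: the `2d`-partite complex of independent sets of `K_{d,d}` with
weights proportional to `λ^{|I(τ)|}` has `γ₂ = λ/(1+λ)`: every link of co-dimension 2 is a
`λ/(1+λ)`-expander, and the link of `τ = {(i,0) : 2 ≤ i ≤ 2d-1}` achieves this bound. -/
theorem hardcore_example_gamma2
    (d : ℕ) (hd : 2 ≤ d) (lam : ℝ) (hlam : 0 < lam)
    (e : ℕ) (he : e + 1 = 2 * d)
    (K : PartiteWeightedComplex (Fin (2 * d) × Bool) e)
    (hvt : ∀ p : Fin (2 * d) × Bool, (K.vtype p : ℕ) = (p.1 : ℕ))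
    (hfacets : ∀ τ : Finset (Fin (2 * d) × Bool), τ ∈ K.facets ↔
      ((∀ i : Fin (2 * d), ((i, false) ∈ τ ↔ (i, true) ∉ τ)) ∧
       (∀ i j : Fin (2 * d), (i, true) ∈ τ → (j, true) ∈ τ →
         (((i : ℕ) < d ∧ (j : ℕ) < d) ∨ (d ≤ (i : ℕ) ∧ d ≤ (j : ℕ))))))
    (hpi : ∃ Z : ℝ, 0 < Z ∧ ∀ τ ∈ K.facets,
      K.pi τ = lam ^ ((τ.filter (fun p => p.2 = true)).card) / Z) :
    (∀ τ : Finset (Fin (2 * d) × Bool), K.toWeightedComplex.IsFace τ → τ.card = e - 1 →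
      lambda2 (K.toWeightedComplex.walkMatrix τ) ≤ lam / (1 + lam)) ∧
    lambda2 (K.toWeightedComplex.walkMatrix
      ((Finset.univ.filter
          (fun i : Fin (2 * d) => 1 ≤ (i : ℕ) ∧ (i : ℕ) ≤ 2 * d - 2)).image
        (fun i => (i, false)))) = lam / (1 + lam) := by
  obtain ⟨Z, hZ, hpiZ⟩ := hpi
  have he2 : e + 1 = 2 * d := he
  have bound : ∀ τ : Finset (Fin (2 * d) × Bool), K.toWeightedComplex.IsFace τ →
      τ.card = e - 1 →
      lambda2 (K.toWeightedComplex.walkMatrix τ) ≤ lam / (1 + lam) := by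
    intro τ hface hcard
    unfold lambda2
    apply Real.sSup_le
    · rintro μ ⟨hμ1, hμspec⟩
      obtain ⟨s, i₀, j₀, hs, hij, hsi, hsj, rfl⟩ :=
        face_structure he2 K hfacets hd τ hface hcard
      exact spectral_bound hlam K hfacets hZ hpiZ s hs i₀ j₀ hij hsi hsj μ hμ1 hμspec
    · positivity
  refine ⟨bound, ?_⟩
  have h2d : 0 < 2 * d := by omega
  have h2d' : 2 * d - 1 < 2 * d := by omega
  have hτeq : (Finset.univ.filter
        (fun i : Fin (2 * d) => 1 ≤ (i : ℕ) ∧ (i : ℕ) ≤ 2 * d - 2)).image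
        (fun i => (i, false)) = theTau d (fun _ => false) ⟨0, h2d⟩ ⟨2*d - 1, h2d'⟩ := by
    ext p
    rw [mem_theTau]
    simp only [Finset.mem_image, Finset.mem_filter, Finset.mem_univ, true_and]
    constructor
    · rintro ⟨i, ⟨hi1, hi2⟩, rfl⟩
      refine ⟨?_, ?_, rfl⟩
      · intro h
        rw [Fin.ext_iff] at h
        simp only [Fin.val_mk] at h
        omega
      · intro h
        rw [Fin.ext_iff] at h
        simp only [Fin.val_mk] at h
        omega
    · rintro ⟨h1, h2, h3⟩
      refine ⟨p.1, ⟨?_, ?_⟩, Prod.ext rfl h3.symm⟩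
      · rw [Fin.ext_iff] at h1
        simp only [Fin.val_mk] at h1
        omega
      · rw [Fin.ext_iff] at h2
        simp only [Fin.val_mk] at h2
        have := p.1.isLt
        omega
  rw [hτeq]
  apply le_antisymm
  · apply Real.sSup_le
    · rintro μ ⟨hμ1, hμspec⟩
      have hs : Indep d (fun _ => false) := fun i j hi _ => by simp at hi
      have hij : (⟨0, h2d⟩ : Fin (2*d)) ≠ ⟨2*d - 1, h2d'⟩ := by
        simp only [ne_eq, Fin.mk.injEq]
        omega
      exact spectral_bound hlam K hfacets hZ hpiZ (fun _ => false) hs _ _ hij rfl rfl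
        μ hμ1 hμspec
    · positivity
  · apply le_csSup
    · exact ⟨1, fun x hx => le_of_lt hx.1⟩
    · refine ⟨(div_lt_one (by linarith)).2 (by linarith), ?_⟩
      exact spec_member hlam K hfacets hZ hpiZ hd h2d h2d'
end

section
/- Let G be a finite simple graph with vertex set V and let {L(v)}_{v∈V} be finite color lists such that G admits at least one proper list coloring (a map σ with σ(v) ∈ L(v) for all v and σ(u) ≠ σ(v) whenever {u,v} is an edge of G). Let X(G,L) be the |V|-partite weighted coloring complex on ground set {(v,c) : v ∈ V, c ∈ L(v)} with parts T_v = {v}×L(v), whose facets are the sets {(v,σ(v)) : v ∈ V} for proper list colorings σ, with all subsets of facets as faces, equipped with the uniform distribution π on facets. Then for every pair of distinct non-adjacent vertices u,w of G and every face τ of X(G,L) of type V∖{u,w}, the 1-skeleton of (X_τ,π_τ) is a complete bipartite graph, with all edge weights equal, between the colors admissible for u and the colors admissible for w given τ, and consequently λ2(P_τ) ≤ 0 (i.e., ε_{u,w} ≤ 0). -/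
open Polynomial in
lemma cube_spec_le {n : Type*} [Fintype n] [DecidableEq n] (P : Matrix n n ℝ)
    (h : P * P * P = P) {μ : ℝ} (hμ : μ ∈ spectrum ℝ P) (hlt : μ < 1) : μ ≤ 0 := by
  have hmem : (fun k => eval k (X^3 - X : ℝ[X])) μ ∈ spectrum ℝ (aeval P (X^3 - X : ℝ[X])) :=
    spectrum.subset_polynomial_aeval P (X^3 - X) ⟨μ, hμ, rfl⟩
  have haev : (aeval P (X^3 - X : ℝ[X])) = 0 := by
    rw [map_sub, aeval_X_pow, aeval_X, show P^3 = P * P * P from by rw [pow_succ, pow_two], h, sub_self]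
  rw [haev] at hmem
  have hz : μ^3 - μ = 0 := by
    by_contra hne
    have : IsUnit (algebraMap ℝ (Matrix n n ℝ) (μ^3 - μ) - 0) := by
      rw [sub_zero]
      exact (isUnit_iff_ne_zero.2 hne).map (algebraMap ℝ (Matrix n n ℝ))
    exact (spectrum.mem_iff.1 (by simpa using hmem)) this
  have : μ * (μ - 1) * (μ + 1) = 0 := by ring_nf; linarith [hz]
  rcases mul_eq_zero.1 this with h1 | h1
  · rcases mul_eq_zero.1 h1 with h2 | h2
    · exact le_of_eq h2
    · linarith
  · linarith

open WeightedComplex in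
/-- In the coloring complex of a graph `G` with lists `L` (with the uniform distribution on
proper list colorings), for any two distinct non-adjacent vertices `u, w` and any face `τ` of
type `V ∖ {u,w}`, the 1-skeleton of the link of `τ` is a complete bipartite graph with all
edge weights equal (between the colors admissible for `u` and for `w` given `τ`), and hence
`λ₂(P_τ) ≤ 0`. -/
theorem coloring_complex_nonadjacent_link
    {Vt : Type*} [Fintype Vt] [DecidableEq Vt]
    {C : Type*} [Fintype C] [DecidableEq C]
    (G : SimpleGraph Vt) (L : Vt → Finset C)
    (e : ℕ) (he : e + 1 = Fintype.card Vt)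
    (K : WeightedComplex (Vt × C) e)
    (hfacets : ∀ τ : Finset (Vt × C), τ ∈ K.facets ↔
      ∃ σ : Vt → C, (∀ v, σ v ∈ L v) ∧ (∀ u v : Vt, G.Adj u v → σ u ≠ σ v) ∧
        τ = Finset.univ.image (fun v => (v, σ v)))
    (hunif : ∀ τ ∈ K.facets, K.pi τ = 1 / (K.facets.card : ℝ)) :
    ∀ u w : Vt, u ≠ w → ¬ G.Adj u w →
      ∀ τ : Finset (Vt × C), K.IsFace τ → τ.image Prod.fst = Finset.univ \ {u, w} →
        (∃ Wt : ℝ, 0 < Wt ∧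
          ∀ x y : Vt × C, x ∉ τ → K.IsFace (insert x τ) → y ∉ τ → K.IsFace (insert y τ) →
            K.linkWeight τ x y = if x.1 ≠ y.1 then Wt else 0) ∧
        lambda2 (K.walkMatrix τ) ≤ 0 := by
  
  classical
  intro u w huw hadj τ hτface hτtype
  obtain ⟨η0, hη0, hτη0⟩ := hτface
  obtain ⟨σ0, hσ0L, hσ0P, hη0eq⟩ := (hfacets η0).1 hη0
  -- membership characterization of facets
  have hmemfac : ∀ (σ : Vt → C) (p : Vt × C),
      p ∈ Finset.univ.image (fun v => (v, σ v)) ↔ σ p.1 = p.2 := by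
    intro σ p
    simp only [Finset.mem_image, Finset.mem_univ, true_and]
    constructor
    · rintro ⟨v, rfl⟩; rfl
    · intro h; exact ⟨p.1, by simp [h]⟩
  -- within a facet, first coordinates determine elements
  have hinj : ∀ η ∈ K.facets, ∀ p ∈ η, ∀ q ∈ η, p.1 = q.1 → p = q := by
    intro η hη p hp q hq h1
    obtain ⟨σ, -, -, rfl⟩ := (hfacets η).1 hη
    have hp' := (hmemfac σ p).1 hp
    have hq' := (hmemfac σ q).1 hq
    exact Prod.ext_iff.2 ⟨h1, by rw [← hp', ← hq', h1]⟩
  have hτmem : ∀ v : Vt, v ≠ u → v ≠ w → (v, σ0 v) ∈ τ := by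
    intro v hvu hvw
    have hv : v ∈ τ.image Prod.fst := by
      rw [hτtype]
      simp [hvu, hvw]
    obtain ⟨p, hpτ, hp1⟩ := Finset.mem_image.1 hv
    have hpη0 : p ∈ η0 := hτη0 hpτ
    rw [hη0eq] at hpη0
    have hp0 := (hmemfac σ0 p).1 hpη0
    have : p = (v, σ0 v) := Prod.ext_iff.2 ⟨hp1, by rw [← hp0, hp1]⟩
    exact this ▸ hpτ
  have hτfst : ∀ p ∈ τ, p.1 ≠ u ∧ p.1 ≠ w := by
    intro p hp
    have h : p.1 ∈ τ.image Prod.fst := Finset.mem_image_of_mem _ hp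
    rw [hτtype] at h
    simp only [Finset.mem_sdiff, Finset.mem_univ, true_and, Finset.mem_insert,
      Finset.mem_singleton, not_or] at h
    exact h
  have hτval : ∀ p ∈ τ, σ0 p.1 = p.2 := by
    intro p hp
    have h := hτη0 hp
    rw [hη0eq] at h
    exact (hmemfac σ0 p).1 h
  have hcontain : ∀ σ : Vt → C, (∀ v, v ≠ u → v ≠ w → σ v = σ0 v) →
      τ ⊆ Finset.univ.image (fun v => (v, σ v)) := by
    intro σ hσ p hp
    rw [hmemfac]
    obtain ⟨h1, h2⟩ := hτfst p hp
    rw [hσ p.1 h1 h2]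
    exact hτval p hp
  have hagree : ∀ σ : Vt → C, τ ⊆ Finset.univ.image (fun v => (v, σ v)) →
      ∀ v, v ≠ u → v ≠ w → σ v = σ0 v := by
    intro σ hsub v h1 h2
    exact (hmemfac σ (v, σ0 v)).1 (hsub (hτmem v h1 h2))
  have hext : ∀ x : Vt × C, x ∉ τ → K.IsFace (insert x τ) →
      (x.1 = u ∨ x.1 = w) ∧ ∃ σ : Vt → C, (∀ v, σ v ∈ L v) ∧
        (∀ a b, G.Adj a b → σ a ≠ σ b) ∧ σ x.1 = x.2 ∧ ∀ v, v ≠ u → v ≠ w → σ v = σ0 v := by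
    intro x hxτ hxf
    obtain ⟨η, hη, hsub⟩ := hxf
    obtain ⟨σ, hL', hP', rfl⟩ := (hfacets η).1 hη
    have hτsub : τ ⊆ _ := (Finset.insert_subset_iff.1 hsub).2
    have hxmem : σ x.1 = x.2 := (hmemfac σ x).1 (hsub (Finset.mem_insert_self _ _))
    have hagr := hagree σ hτsub
    refine ⟨?_, σ, hL', hP', hxmem, hagr⟩
    by_contra hcon
    push_neg at hcon
    apply hxτ
    have hx : x = (x.1, σ0 x.1) :=
      Prod.ext_iff.2 ⟨rfl, by rw [← hxmem, hagr x.1 hcon.1 hcon.2]⟩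
    rw [hx]
    exact hτmem x.1 hcon.1 hcon.2
  have hcomb : ∀ x y : Vt × C, x.1 = u → y.1 = w → x ∉ τ → K.IsFace (insert x τ) →
      y ∉ τ → K.IsFace (insert y τ) →
      ∃ η1 ∈ K.facets, K.facets.filter (fun η => τ ⊆ η ∧ x ∈ η ∧ y ∈ η) = {η1} := by
    intro x y hxu hyw hxτ hxf hyτ hyf
    obtain ⟨-, σx, hxL, hxP, hxv, hxa⟩ := hext x hxτ hxf
    obtain ⟨-, σy, hyL, hyP, hyv, hya⟩ := hext y hyτ hyf
    rw [hxu] at hxv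
    rw [hyw] at hyv
    set σc : Vt → C := fun v => if v = u then x.2 else if v = w then y.2 else σ0 v with hσc
    have hcu : σc u = x.2 := by simp [hσc]
    have hcw : σc w = y.2 := by
      simp [hσc, Ne.symm huw]
    have hco : ∀ v, v ≠ u → v ≠ w → σc v = σ0 v := by
      intro v h1 h2; simp [hσc, h1, h2]
    have hcL : ∀ v, σc v ∈ L v := by
      intro v
      by_cases h1 : v = u
      · rw [h1, hcu, ← hxv]; exact hxL u
      · by_cases h2 : v = w
        · rw [h2, hcw, ← hyv]; exact hyL w
        · rw [hco v h1 h2]; exact hσ0L v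
    have hcP : ∀ a b, G.Adj a b → σc a ≠ σc b := by
      intro a b hab
      have hne : a ≠ b := hab.ne
      by_cases ha1 : a = u
      · by_cases hb2 : b = w
        · rw [ha1, hb2] at hab; exact absurd hab hadj
        · have hb1 : b ≠ u := fun h => hne (ha1.trans h.symm)
          rw [ha1, hcu, hco b hb1 hb2, ← hxa b hb1 hb2, ← hxv]
          rw [ha1] at hab
          exact hxP u b hab
      · by_cases ha2 : a = w
        · by_cases hb1 : b = u
          · rw [ha2, hb1] at hab; exact absurd hab.symm hadj
          · have hb2 : b ≠ w := fun h => hne (ha2.trans h.symm)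
            rw [ha2, hcw, hco b hb1 hb2, ← hya b hb1 hb2, ← hyv]
            rw [ha2] at hab
            exact hyP w b hab
        · by_cases hb1 : b = u
          · rw [hb1, hco a ha1 ha2, hcu, ← hxa a ha1 ha2, ← hxv]
            rw [hb1] at hab
            exact hxP a u hab
          · by_cases hb2 : b = w
            · rw [hb2, hco a ha1 ha2, hcw, ← hya a ha1 ha2, ← hyv]
              rw [hb2] at hab
              exact hyP a w hab
            · rw [hco a ha1 ha2, hco b hb1 hb2]
              exact hσ0P a b hab
    set ηc := Finset.univ.image (fun v => (v, σc v)) with hηc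
    have hηcF : ηc ∈ K.facets := (hfacets ηc).2 ⟨σc, hcL, hcP, rfl⟩
    refine ⟨ηc, hηcF, ?_⟩
    ext η
    simp only [Finset.mem_filter, Finset.mem_singleton]
    constructor
    · rintro ⟨hηF, hτs, hx, hy⟩
      obtain ⟨σ, hL', hP', rfl⟩ := (hfacets η).1 hηF
      have hag := hagree σ hτs
      have hσu : σ u = x.2 := by have h := (hmemfac σ x).1 hx; rw [hxu] at h; exact h
      have hσw : σ w = y.2 := by have h := (hmemfac σ y).1 hy; rw [hyw] at h; exact h
      have hσeq : σ = σc := by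
        funext v
        by_cases h1 : v = u
        · rw [h1, hσu, hcu]
        · by_cases h2 : v = w
          · rw [h2, hσw, hcw]
          · rw [hag v h1 h2, hco v h1 h2]
      rw [hσeq]
    · rintro rfl
      refine ⟨hηcF, hcontain σc hco, ?_, ?_⟩
      · rw [hmemfac, hxu, hcu]
      · rw [hmemfac, hyw, hcw]
  -- numerics
  have hN : (0:ℝ) < (K.facets.card : ℝ) :=
    Nat.cast_pos.2 (Finset.card_pos.2 K.facets_nonempty)
  have hN0 : (K.facets.card : ℝ) ≠ 0 := ne_of_gt hN
  set M : ℕ := (K.facets.filter (fun η => τ ⊆ η)).card with hMdef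
  have hMpos : 0 < M := Finset.card_pos.2 ⟨η0, Finset.mem_filter.2 ⟨hη0, hτη0⟩⟩
  have hMR : (0:ℝ) < (M:ℝ) := Nat.cast_pos.2 hMpos
  have hMne : (M:ℝ) ≠ 0 := ne_of_gt hMR
  have hfw : K.faceWeight τ = (M:ℝ) / (K.facets.card : ℝ) := by
    unfold WeightedComplex.faceWeight
    rw [Finset.sum_congr rfl (fun η hη => hunif η (Finset.mem_filter.1 hη).1),
      Finset.sum_const, nsmul_eq_mul, mul_one_div]
  have hNW : ∀ x y : Vt × C, x ∉ τ → K.IsFace (insert x τ) → y ∉ τ → K.IsFace (insert y τ) →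
      x.1 ≠ y.1 → K.linkWeight τ x y = (M:ℝ)⁻¹ := by
    intro x y hxτ hxf hyτ hyf hne
    have hedge : ∃ η1 ∈ K.facets,
        K.facets.filter (fun η => τ ⊆ η ∧ x ∈ η ∧ y ∈ η) = {η1} := by
      obtain hx1 | hx1 := (hext x hxτ hxf).1 <;> obtain hy1 | hy1 := (hext y hyτ hyf).1
      · exact absurd (hx1.trans hy1.symm) hne
      · exact hcomb x y hx1 hy1 hxτ hxf hyτ hyf
      · obtain ⟨η1, h1, h2⟩ := hcomb y x hy1 hx1 hyτ hyf hxτ hxf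
        refine ⟨η1, h1, ?_⟩
        rw [← h2]
        apply Finset.filter_congr
        intro η _
        constructor
        · rintro ⟨g1, g2, g3⟩; exact ⟨g1, g3, g2⟩
        · rintro ⟨g1, g2, g3⟩; exact ⟨g1, g3, g2⟩
      · exact absurd (hx1.trans hy1.symm) hne
    obtain ⟨η1, hη1, hfilt⟩ := hedge
    unfold WeightedComplex.linkWeight
    rw [if_neg (by push_neg; exact ⟨fun h => hne (by rw [h]), hxτ, hyτ⟩),
      hfilt, Finset.sum_singleton, hunif η1 hη1, hfw]
    field_simp
  set AU : Finset (Vt × C) :=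
    Finset.univ.filter (fun x => x.1 = u ∧ x ∉ τ ∧ K.IsFace (insert x τ)) with hAUdef
  set BW : Finset (Vt × C) :=
    Finset.univ.filter (fun x => x.1 = w ∧ x ∉ τ ∧ K.IsFace (insert x τ)) with hBWdef
  have hAUmem : ∀ x : Vt × C, x ∈ AU ↔ x.1 = u ∧ x ∉ τ ∧ K.IsFace (insert x τ) := by
    intro x; simp [hAUdef]
  have hBWmem : ∀ x : Vt × C, x ∈ BW ↔ x.1 = w ∧ x ∉ τ ∧ K.IsFace (insert x τ) := by
    intro x; simp [hBWdef]
  have hABdisj : ∀ x, x ∈ AU → x ∉ BW := by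
    intro x hx hx'
    exact huw (by rw [← ((hAUmem x).1 hx).1, ((hBWmem x).1 hx').1])
  have hBAdisj : ∀ x, x ∈ BW → x ∉ AU := by
    intro x hx hx'
    exact huw (by rw [← ((hAUmem x).1 hx').1, ((hBWmem x).1 hx).1])
  have hx0 : (u, σ0 u) ∈ AU := by
    rw [hAUmem]
    refine ⟨rfl, fun h => (hτfst _ h).1 rfl, η0, hη0, Finset.insert_subset ?_ hτη0⟩
    rw [hη0eq]
    exact (hmemfac σ0 (u, σ0 u)).2 rfl
  have hy0 : (w, σ0 w) ∈ BW := by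
    rw [hBWmem]
    refine ⟨rfl, fun h => (hτfst _ h).2 rfl, η0, hη0, Finset.insert_subset ?_ hτη0⟩
    rw [hη0eq]
    exact (hmemfac σ0 (w, σ0 w)).2 rfl
  have ha : (0:ℝ) < (AU.card : ℝ) := Nat.cast_pos.2 (Finset.card_pos.2 ⟨_, hx0⟩)
  have hb : (0:ℝ) < (BW.card : ℝ) := Nat.cast_pos.2 (Finset.card_pos.2 ⟨_, hy0⟩)
  have hane : (AU.card : ℝ) ≠ 0 := ne_of_gt ha
  have hbne : (BW.card : ℝ) ≠ 0 := ne_of_gt hb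
  have hW : ∀ x y : Vt × C, K.linkWeight τ x y =
      if (x ∈ AU ∧ y ∈ BW) ∨ (x ∈ BW ∧ y ∈ AU) then (M:ℝ)⁻¹ else 0 := by
    intro x y
    by_cases hc : (x ∈ AU ∧ y ∈ BW) ∨ (x ∈ BW ∧ y ∈ AU)
    · rw [if_pos hc]
      rcases hc with ⟨hx, hy⟩ | ⟨hx, hy⟩
      · obtain ⟨h1, h2, h3⟩ := (hAUmem x).1 hx
        obtain ⟨g1, g2, g3⟩ := (hBWmem y).1 hy
        exact hNW x y h2 h3 g2 g3 (by rw [h1, g1]; exact huw)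
      · obtain ⟨h1, h2, h3⟩ := (hBWmem x).1 hx
        obtain ⟨g1, g2, g3⟩ := (hAUmem y).1 hy
        exact hNW x y h2 h3 g2 g3 (by rw [h1, g1]; exact huw.symm)
    · rw [if_neg hc]
      unfold WeightedComplex.linkWeight
      by_cases h1 : x = y ∨ x ∈ τ ∨ y ∈ τ
      · rw [if_pos h1]
      · rw [if_neg h1]
        push_neg at h1
        obtain ⟨hxy, hxτ, hyτ⟩ := h1
        have hempty : K.facets.filter (fun η => τ ⊆ η ∧ x ∈ η ∧ y ∈ η) = ∅ := by
          rw [Finset.filter_eq_empty_iff]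
          rintro η hη ⟨hsub, hx, hy⟩
          have hxf : K.IsFace (insert x τ) := ⟨η, hη, Finset.insert_subset hx hsub⟩
          have hyf : K.IsFace (insert y τ) := ⟨η, hη, Finset.insert_subset hy hsub⟩
          by_cases hfst : x.1 = y.1
          · exact hxy (hinj η hη x hx y hy hfst)
          · apply hc
            rcases (hext x hxτ hxf).1 with h | h <;> rcases (hext y hyτ hyf).1 with h' | h'
            · exact absurd (h.trans h'.symm) hfst
            · exact Or.inl ⟨(hAUmem x).2 ⟨h, hxτ, hxf⟩, (hBWmem y).2 ⟨h', hyτ, hyf⟩⟩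
            · exact Or.inr ⟨(hBWmem x).2 ⟨h, hxτ, hxf⟩, (hAUmem y).2 ⟨h', hyτ, hyf⟩⟩
            · exact absurd (h.trans h'.symm) hfst
        rw [hempty, Finset.sum_empty, zero_div]
  constructor
  · refine ⟨(M:ℝ)⁻¹, inv_pos.2 hMR, ?_⟩
    intro x y hxτ hxf hyτ hyf
    by_cases hfst : x.1 ≠ y.1
    · rw [if_pos hfst]
      exact hNW x y hxτ hxf hyτ hyf hfst
    · rw [if_neg hfst]
      push_neg at hfst
      rw [hW, if_neg]
      rintro (⟨hx, hy⟩ | ⟨hx, hy⟩)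
      · exact huw (by rw [← ((hAUmem x).1 hx).1, hfst, ((hBWmem y).1 hy).1])
      · exact huw (by rw [← ((hAUmem y).1 hy).1, ← hfst, ((hBWmem x).1 hx).1])
  -- second part: eigenvalue bound
  · set Pm := K.walkMatrix τ with hPmdef
    have hPapp : ∀ x y, Pm x y = K.linkWeight τ x y / ∑ z, K.linkWeight τ x z :=
      fun x y => rfl
    have hrow : ∀ x : Vt × C, (∑ z, K.linkWeight τ x z) =
        if x ∈ AU then (BW.card : ℝ) * (M:ℝ)⁻¹
        else if x ∈ BW then (AU.card : ℝ) * (M:ℝ)⁻¹ else 0 := by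
      intro x
      by_cases hx : x ∈ AU
      · rw [if_pos hx]
        have hz : ∀ z, K.linkWeight τ x z = if z ∈ BW then (M:ℝ)⁻¹ else 0 := by
          intro z
          rw [hW]
          by_cases hzB : z ∈ BW
          · rw [if_pos hzB, if_pos (Or.inl ⟨hx, hzB⟩)]
          · rw [if_neg hzB, if_neg]
            rintro (⟨-, h⟩ | ⟨h, -⟩)
            · exact hzB h
            · exact hABdisj x hx h
        rw [Finset.sum_congr rfl (fun z _ => hz z), Finset.sum_ite_mem,
          Finset.univ_inter, Finset.sum_const, nsmul_eq_mul]
      · rw [if_neg hx]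
        by_cases hx' : x ∈ BW
        · rw [if_pos hx']
          have hz : ∀ z, K.linkWeight τ x z = if z ∈ AU then (M:ℝ)⁻¹ else 0 := by
            intro z
            rw [hW]
            by_cases hzA : z ∈ AU
            · rw [if_pos hzA, if_pos (Or.inr ⟨hx', hzA⟩)]
            · rw [if_neg hzA, if_neg]
              rintro (⟨h, -⟩ | ⟨-, h⟩)
              · exact hx h
              · exact hzA h
          rw [Finset.sum_congr rfl (fun z _ => hz z), Finset.sum_ite_mem,
            Finset.univ_inter, Finset.sum_const, nsmul_eq_mul]
        · rw [if_neg hx']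
          have hz : ∀ z, K.linkWeight τ x z = 0 := by
            intro z
            rw [hW, if_neg]
            rintro (⟨h, -⟩ | ⟨h, -⟩)
            · exact hx h
            · exact hx' h
          rw [Finset.sum_congr rfl (fun z _ => hz z), Finset.sum_const_zero]
    have hPA : ∀ x y, x ∈ AU → Pm x y = if y ∈ BW then (BW.card : ℝ)⁻¹ else 0 := by
      intro x y hx
      rw [hPapp, hW, hrow, if_pos hx]
      by_cases hy : y ∈ BW
      · rw [if_pos (Or.inl ⟨hx, hy⟩), if_pos hy]
        field_simp
      · rw [if_neg hy, if_neg, zero_div]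
        rintro (⟨-, h⟩ | ⟨h, -⟩)
        · exact hy h
        · exact hABdisj x hx h
    have hPB : ∀ x y, x ∈ BW → Pm x y = if y ∈ AU then (AU.card : ℝ)⁻¹ else 0 := by
      intro x y hx
      rw [hPapp, hW, hrow, if_neg (hBAdisj x hx), if_pos hx]
      by_cases hy : y ∈ AU
      · rw [if_pos (Or.inr ⟨hx, hy⟩), if_pos hy]
        field_simp
      · rw [if_neg hy, if_neg, zero_div]
        rintro (⟨h, -⟩ | ⟨-, h⟩)
        · exact hBAdisj x hx h
        · exact hy h
    have hP0 : ∀ x y, x ∉ AU → x ∉ BW → Pm x y = 0 := by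
      intro x y hx hx'
      rw [hPapp, hW, if_neg, zero_div]
      rintro (⟨h, -⟩ | ⟨h, -⟩)
      · exact hx h
      · exact hx' h
    have hPP : ∀ x y, (Pm * Pm) x y =
        if x ∈ AU ∧ y ∈ AU then (AU.card : ℝ)⁻¹
        else if x ∈ BW ∧ y ∈ BW then (BW.card : ℝ)⁻¹ else 0 := by
      intro x y
      rw [Matrix.mul_apply]
      by_cases hx : x ∈ AU
      · have hz : ∀ z, Pm x z * Pm z y =
            if z ∈ BW then (BW.card : ℝ)⁻¹ * (if y ∈ AU then (AU.card : ℝ)⁻¹ else 0)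
            else 0 := by
          intro z
          by_cases hzB : z ∈ BW
          · rw [if_pos hzB, hPA x z hx, if_pos hzB, hPB z y hzB]
          · rw [if_neg hzB, hPA x z hx, if_neg hzB, zero_mul]
        rw [Finset.sum_congr rfl (fun z _ => hz z), Finset.sum_ite_mem,
          Finset.univ_inter, Finset.sum_const, nsmul_eq_mul, ← mul_assoc,
          mul_inv_cancel₀ hbne, one_mul]
        by_cases hy : y ∈ AU
        · rw [if_pos hy, if_pos ⟨hx, hy⟩]
        · rw [if_neg hy, if_neg (fun h => hy h.2), if_neg (fun h => hABdisj x hx h.1)]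
      · by_cases hx' : x ∈ BW
        · have hz : ∀ z, Pm x z * Pm z y =
              if z ∈ AU then (AU.card : ℝ)⁻¹ * (if y ∈ BW then (BW.card : ℝ)⁻¹ else 0)
              else 0 := by
            intro z
            by_cases hzA : z ∈ AU
            · rw [if_pos hzA, hPB x z hx', if_pos hzA, hPA z y hzA]
            · rw [if_neg hzA, hPB x z hx', if_neg hzA, zero_mul]
          rw [Finset.sum_congr rfl (fun z _ => hz z), Finset.sum_ite_mem,
            Finset.univ_inter, Finset.sum_const, nsmul_eq_mul, ← mul_assoc,
            mul_inv_cancel₀ hane, one_mul]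
          by_cases hy : y ∈ BW
          · rw [if_pos hy, if_neg (fun h => hx h.1), if_pos ⟨hx', hy⟩]
          · rw [if_neg hy, if_neg (fun h => hx h.1), if_neg (fun h => hy h.2)]
        · have hz : ∀ z, Pm x z * Pm z y = 0 := fun z => by
            rw [hP0 x z hx hx', zero_mul]
          rw [Finset.sum_congr rfl (fun z _ => hz z), Finset.sum_const_zero,
            if_neg (fun h => hx h.1), if_neg (fun h => hx' h.1)]
    have hcube : Pm * Pm * Pm = Pm := by
      ext x y
      rw [Matrix.mul_apply]
      by_cases hx : x ∈ AU
      · have hz : ∀ z, (Pm * Pm) x z * Pm z y =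
            if z ∈ AU then (AU.card : ℝ)⁻¹ * (if y ∈ BW then (BW.card : ℝ)⁻¹ else 0)
            else 0 := by
          intro z
          by_cases hzA : z ∈ AU
          · rw [if_pos hzA, hPP, if_pos ⟨hx, hzA⟩, hPA z y hzA]
          · rw [if_neg hzA, hPP, if_neg (fun h => hzA h.2),
              if_neg (fun h => hABdisj x hx h.1), zero_mul]
        rw [Finset.sum_congr rfl (fun z _ => hz z), Finset.sum_ite_mem,
          Finset.univ_inter, Finset.sum_const, nsmul_eq_mul, ← mul_assoc,
          mul_inv_cancel₀ hane, one_mul, hPA x y hx]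
      · by_cases hx' : x ∈ BW
        · have hz : ∀ z, (Pm * Pm) x z * Pm z y =
              if z ∈ BW then (BW.card : ℝ)⁻¹ * (if y ∈ AU then (AU.card : ℝ)⁻¹ else 0)
              else 0 := by
            intro z
            by_cases hzB : z ∈ BW
            · rw [if_pos hzB, hPP, if_neg (fun h => hx h.1), if_pos ⟨hx', hzB⟩,
                hPB z y hzB]
            · rw [if_neg hzB, hPP, if_neg (fun h => hx h.1),
                if_neg (fun h => hzB h.2), zero_mul]
          rw [Finset.sum_congr rfl (fun z _ => hz z), Finset.sum_ite_mem,
            Finset.univ_inter, Finset.sum_const, nsmul_eq_mul, ← mul_assoc,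
            mul_inv_cancel₀ hbne, one_mul, hPB x y hx']
        · have hz : ∀ z, (Pm * Pm) x z * Pm z y = 0 := fun z => by
            rw [hPP, if_neg (fun h => hx h.1), if_neg (fun h => hx' h.1), zero_mul]
          rw [Finset.sum_congr rfl (fun z _ => hz z), Finset.sum_const_zero,
            hP0 x y hx hx']
    refine Real.sSup_le ?_ le_rfl
    rintro μ ⟨hμ1, hμ2⟩
    exact cube_spec_le Pm hcube hμ2 hμ1
end
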